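/- arXiv:1109.1258 — 7 statements merged into one kernel-verified Lean document; each statement's English description precedes it below -/
import Mathlib

section
/- For every integer k > d there exists a unique polynomial f_{k,d} in d variables y₁,…,y_d with coefficients in K such that substituting y_i = 𝔱_i for 1 ≤ i ≤ d gives 𝔱_k, i.e. 𝔱_k = f_{k,d}(𝔱₁,…,𝔱_d) in K[x₁,…,x_d]. -/
open scoped BigOperators

noncomputable section

/-- The field `K = ℚ(s₁,s₂)`, the fraction field of `ℚ[s₁,s₂]`. -/
abbrev Kf : Type := FractionRing (MvPolynomial (Fin 2) ℚ)

def s₁ : Kf := algebraMap (MvPolynomial (Fin 2) ℚ) Kf (MvPolynomial.X 0)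
def s₂ : Kf := algebraMap (MvPolynomial (Fin 2) ℚ) Kf (MvPolynomial.X 1)

/-- The power sum `𝔭_n = x₁^n + ⋯ + x_d^n` in `K[x₁,…,x_d]`. -/
def powSum (d n : ℕ) : MvPolynomial (Fin d) Kf := ∑ i : Fin d, MvPolynomial.X i ^ n

/-- The formal exponential `exp (z s) = Σ_{n≥0} s^n z^n / n!` as a power series in `z`
with coefficients in `K[x₁,…,x_d]`. -/
def expS (d : ℕ) (s : Kf) : PowerSeries (MvPolynomial (Fin d) Kf) :=
  PowerSeries.mk fun n => MvPolynomial.C (s ^ n / (n.factorial : Kf))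

/-- The power series `Σ_{n≥0} 𝔭_n z^n / n!`. -/
def psumS (d : ℕ) : PowerSeries (MvPolynomial (Fin d) Kf) :=
  PowerSeries.mk fun n => MvPolynomial.C ((n.factorial : Kf)⁻¹) * powSum d n

/-- The defining identity of the family `𝔱`:
`Σ_{k≥0} 𝔱_k z^{k+2} = (1/(s₁s₂)) (1 − e^{z s₁})(1 − e^{z s₂}) Σ_{n≥0} 𝔭_n z^n/n!`. -/
def IsTFamily (d : ℕ) (t : ℕ → MvPolynomial (Fin d) Kf) : Prop :=
  (PowerSeries.mk fun m => if 2 ≤ m then t (m - 2) else 0) =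
    PowerSeries.C (R := MvPolynomial (Fin d) Kf) (MvPolynomial.C (1 / (s₁ * s₂))) *
      ((1 - expS d s₁) * (1 - expS d s₂) * psumS d)

/-- The scalar exponential series. -/
def Eser (s : Kf) : PowerSeries Kf := PowerSeries.mk fun n => s ^ n / (n.factorial : Kf)

/-- The scalar series `U`. -/
def User : PowerSeries Kf :=
  PowerSeries.C (R := Kf) (1 / (s₁ * s₂)) * ((1 - Eser s₁) * (1 - Eser s₂))

/-- coefficients of U -/
def aU (n : ℕ) : Kf := PowerSeries.coeff (R := Kf) n User

lemma map_Eser (d : ℕ) (s : Kf) :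
    PowerSeries.map (MvPolynomial.C : Kf →+* MvPolynomial (Fin d) Kf) (Eser s) = expS d s := by
  ext n
  simp [Eser, expS]

lemma map_User (d : ℕ) :
    PowerSeries.map (MvPolynomial.C : Kf →+* MvPolynomial (Fin d) Kf) User =
      PowerSeries.C (R := MvPolynomial (Fin d) Kf) (MvPolynomial.C (1 / (s₁ * s₂))) *
        ((1 - expS d s₁) * (1 - expS d s₂)) := by
  rw [User, map_mul, map_mul, map_sub, map_sub, map_one, map_Eser, map_Eser]
  rw [PowerSeries.map_C]

lemma coeff_zero_one_sub_Eser (s : Kf) :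
    PowerSeries.coeff (R := Kf) 0 (1 - Eser s) = 0 := by
  simp [Eser]

lemma coeff_one_one_sub_Eser (s : Kf) :
    PowerSeries.coeff (R := Kf) 1 (1 - Eser s) = -s := by
  simp [Eser]

lemma s1s2_ne : s₁ * s₂ ≠ 0 := by
  rw [s₁, s₂, ← map_mul]
  have h : (MvPolynomial.X 0 * MvPolynomial.X 1 : MvPolynomial (Fin 2) ℚ) ≠ 0 :=
    mul_ne_zero (MvPolynomial.X_ne_zero 0) (MvPolynomial.X_ne_zero 1)
  exact fun hc => h (IsFractionRing.injective (MvPolynomial (Fin 2) ℚ) Kf (by simpa using hc))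

lemma aU_zero : aU 0 = 0 := by
  have := coeff_zero_one_sub_Eser s₁
  rw [aU, User, PowerSeries.coeff_zero_eq_constantCoeff] at *
  simp only [map_mul] at *
  rw [this]
  ring

lemma coeff_prod_eq (n : ℕ) : PowerSeries.coeff (R := Kf) n ((1 - Eser s₁) * (1 - Eser s₂)) =
    ∑ j ∈ Finset.range (n+1),
      PowerSeries.coeff (R := Kf) j (1 - Eser s₁) * PowerSeries.coeff (R := Kf) (n - j) (1 - Eser s₂) := by
  rw [PowerSeries.coeff_mul, Finset.Nat.sum_antidiagonal_eq_sum_range_succ_mk]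

lemma aU_one : aU 1 = 0 := by
  rw [aU, User, PowerSeries.coeff_C_mul, coeff_prod_eq, Finset.sum_range_succ,
    Finset.sum_range_succ, Finset.sum_range_zero]
  norm_num [coeff_zero_one_sub_Eser, coeff_one_one_sub_Eser]

lemma aU_two : aU 2 = 1 := by
  rw [aU, User, PowerSeries.coeff_C_mul, coeff_prod_eq, Finset.sum_range_succ,
    Finset.sum_range_succ, Finset.sum_range_succ, Finset.sum_range_zero]
  norm_num [coeff_zero_one_sub_Eser, coeff_one_one_sub_Eser]
  have h1 : s₁ ≠ 0 := left_ne_zero_of_mul s1s2_ne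
  have h2 : s₂ ≠ 0 := right_ne_zero_of_mul s1s2_ne
  field_simp

lemma tk_eq (d : ℕ) (t : ℕ → MvPolynomial (Fin d) Kf) (ht : IsTFamily d t) (k : ℕ) :
    t k = ∑ n ∈ Finset.range (k+1),
      MvPolynomial.C (aU (k+2-n) * ((n.factorial : Kf))⁻¹) * powSum d n := by
  have h := congrArg (PowerSeries.coeff (k+2)) ht
  rw [PowerSeries.coeff_mk] at h
  simp only [show 2 ≤ k + 2 by omega, if_true, Nat.add_sub_cancel] at h
  rw [show PowerSeries.C (R := MvPolynomial (Fin d) Kf) (MvPolynomial.C (1 / (s₁ * s₂))) *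
      ((1 - expS d s₁) * (1 - expS d s₂) * psumS d) =
      (PowerSeries.C (R := MvPolynomial (Fin d) Kf) (MvPolynomial.C (1 / (s₁ * s₂))) *
      ((1 - expS d s₁) * (1 - expS d s₂))) * psumS d by ring, ← map_User d,
    PowerSeries.coeff_mul] at h
  rw [← Finset.Nat.sum_antidiagonal_swap
      (f := fun p => PowerSeries.coeff p.1
        (PowerSeries.map (MvPolynomial.C : Kf →+* MvPolynomial (Fin d) Kf) User) *
        PowerSeries.coeff p.2 (psumS d))] at h
  simp only [Prod.fst_swap, Prod.snd_swap] at h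
  rw [Finset.Nat.sum_antidiagonal_eq_sum_range_succ_mk] at h
  rw [show (k + 2).succ = (k+1) + 1 + 1 by omega] at h
  simp only at h
  rw [Finset.sum_range_succ, Finset.sum_range_succ] at h
  simp only [PowerSeries.coeff_map, show k + 2 - (k+1+1) = 0 by omega,
    show k + 2 - (k+1) = 1 by omega] at h
  rw [show (PowerSeries.coeff (R := Kf) 0) User = aU 0 from rfl,
    show (PowerSeries.coeff (R := Kf) 1) User = aU 1 from rfl, aU_zero, aU_one] at h
  simp only [map_zero, zero_mul, add_zero] at h
  rw [h]
  refine Finset.sum_congr rfl fun n hn => ?_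
  rw [psumS, PowerSeries.coeff_mk, map_mul, aU]
  ring

open MvPolynomial

/-- A surjective ring endomorphism of a Noetherian ring is injective. -/
lemma endo_injective {R : Type*} [CommRing R] [IsNoetherianRing R] (f : R →+* R)
    (hf : Function.Surjective f) : Function.Injective f := by
  have mono : Monotone (fun n : ℕ => RingHom.ker (f ^ n)) := by
    intro n m hnm x hx
    have : f ^ m = f ^ (m - n) * f ^ n := by rw [← pow_add]; congr 1; omega
    simp only [RingHom.mem_ker] at hx ⊢
    rw [this, RingHom.mul_def, RingHom.comp_apply, hx, map_zero]
  obtain ⟨n, hn⟩ := monotone_stabilizes_iff_noetherian.mpr (inferInstance : IsNoetherian R R)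
    ⟨fun n : ℕ => RingHom.ker (f ^ n), mono⟩
  rw [injective_iff_map_eq_zero]
  intro x hx
  have hsurj : Function.Surjective (⇑(f ^ n)) := by
    rw [RingHom.coe_pow]; exact hf.iterate n
  obtain ⟨y, hy⟩ := hsurj x
  have hy1 : (f ^ (n + 1)) y = 0 := by
    rw [pow_succ', RingHom.mul_def, RingHom.comp_apply, hy, hx]
  have : y ∈ RingHom.ker (f ^ n) := by
    have := hn (n + 1) (by omega)
    simp only [OrderHom.coe_mk] at this
    rw [this]; exact hy1
  rw [RingHom.mem_ker] at this
  rw [← hy, this]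

section Main

variable (d : ℕ) (t : ℕ → MvPolynomial (Fin d) Kf)

lemma powSum_eq_psum (n : ℕ) : powSum d n = psum (Fin d) Kf n := rfl

/-- the subalgebra generated by `t 1, …, t d` -/
def Asub : Subalgebra Kf (MvPolynomial (Fin d) Kf) :=
  Algebra.adjoin Kf (Set.range fun i : Fin d => t (i.val + 1))

lemma C_mem_Asub (x : Kf) : MvPolynomial.C x ∈ Asub d t := by
  rw [← MvPolynomial.algebraMap_eq]
  exact Subalgebra.algebraMap_mem _ x

lemma t_mem_Asub_of_le (n : ℕ) (h1 : 1 ≤ n) (h2 : n ≤ d) : t n ∈ Asub d t := by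
  refine Algebra.subset_adjoin ⟨⟨n - 1, by omega⟩, ?_⟩
  simp only [Fin.val_mk]
  congr 1
  omega

lemma t_symm (ht : IsTFamily d t) (k : ℕ) : t k ∈ symmetricSubalgebra (Fin d) Kf := by
  rw [tk_eq d t ht k]
  refine Subalgebra.sum_mem _ fun n _ => Subalgebra.mul_mem _ ?_ ?_
  · rw [← MvPolynomial.algebraMap_eq]; exact Subalgebra.algebraMap_mem _ _
  · exact (mem_symmetricSubalgebra _).2 (psum_isSymmetric _ _ n)

lemma esymm_gt {n : ℕ} (h : d < n) : esymm (Fin d) Kf n = 0 := by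
  rw [esymm, Finset.powersetCard_eq_empty.2 (by rw [Finset.card_fin]; exact h), Finset.sum_empty]

lemma natCast_factorial_ne (n : ℕ) : ((n.factorial : Kf)) ≠ 0 := by
  exact_mod_cast Nat.cast_ne_zero.2 n.factorial_ne_zero

lemma psum_esymm_mem (hd : 1 ≤ d) (ht : IsTFamily d t) :
    ∀ n : ℕ, psum (Fin d) Kf n ∈ Asub d t ∧ esymm (Fin d) Kf n ∈ Asub d t := by
  intro n
  induction n using Nat.strong_induction_on with
  | _ n ih =>
    rcases Nat.eq_zero_or_pos n with rfl | hn
    · constructor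
      · rw [psum_zero]; exact Subalgebra.natCast_mem _ _
      · rw [esymm_zero]; exact Subalgebra.one_mem _
    rcases le_or_gt n d with hnd | hnd
    · -- 1 ≤ n ≤ d
      have hpsum : psum (Fin d) Kf n ∈ Asub d t := by
        have heq := tk_eq d t ht n
        rw [Finset.sum_range_succ, show n + 2 - n = 2 by omega, aU_two, one_mul,
          powSum_eq_psum] at heq
        have hrest : C ((n.factorial : Kf))⁻¹ * psum (Fin d) Kf n =
            t n - ∑ m ∈ Finset.range n, C (aU (n + 2 - m) * ((m.factorial : Kf))⁻¹) *
              powSum d m := by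
          rw [heq]; ring
        have hmem : C ((n.factorial : Kf))⁻¹ * psum (Fin d) Kf n ∈ Asub d t := by
          rw [hrest]
          refine Subalgebra.sub_mem _ (t_mem_Asub_of_le d t n hn hnd) ?_
          refine Subalgebra.sum_mem _ fun m hm => Subalgebra.mul_mem _ (C_mem_Asub d t _) ?_
          rw [powSum_eq_psum]
          exact (ih m (Finset.mem_range.1 hm)).1
        have : psum (Fin d) Kf n = C ((n.factorial : Kf)) *
            (C ((n.factorial : Kf))⁻¹ * psum (Fin d) Kf n) := by
          rw [← mul_assoc, ← map_mul, mul_inv_cancel₀ (natCast_factorial_ne n), map_one, one_mul]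
        rw [this]
        exact Subalgebra.mul_mem _ (C_mem_Asub d t _) hmem
      refine ⟨hpsum, ?_⟩
      -- esymm n via Newton
      have newton := mul_esymm_eq_sum (Fin d) Kf n
      have hcast : (n : MvPolynomial (Fin d) Kf) = C ((n : Kf)) := by
        rw [map_natCast]
      have hne : ((n : Kf)) ≠ 0 := Nat.cast_ne_zero.2 (by omega)
      have : esymm (Fin d) Kf n = C ((n : Kf))⁻¹ * ((n : MvPolynomial (Fin d) Kf) *
          esymm (Fin d) Kf n) := by
        rw [hcast, ← mul_assoc, ← map_mul, inv_mul_cancel₀ hne, map_one, one_mul]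
      rw [this, newton]
      refine Subalgebra.mul_mem _ (C_mem_Asub d t _) (Subalgebra.mul_mem _ ?_ ?_)
      · exact Subalgebra.pow_mem _ (Subalgebra.neg_mem _ (Subalgebra.one_mem _)) _
      refine Subalgebra.sum_mem _ fun a ha => ?_
      rw [Finset.mem_filter, Finset.HasAntidiagonal.mem_antidiagonal] at ha
      refine Subalgebra.mul_mem _ (Subalgebra.mul_mem _
        (Subalgebra.pow_mem _ (Subalgebra.neg_mem _ (Subalgebra.one_mem _)) _)
        ((ih a.1 ha.2).2)) ?_
      have hsum := ha.1
      rcases eq_or_lt_of_le (show a.2 ≤ n by omega) with h2 | h2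
      · rw [h2]; exact hpsum
      · exact (ih a.2 h2).1
    · -- n > d
      have hesymm : esymm (Fin d) Kf n ∈ Asub d t := by
        rw [esymm_gt d hnd]; exact Subalgebra.zero_mem _
      refine ⟨?_, hesymm⟩
      have newton := psum_eq_mul_esymm_sub_sum (Fin d) Kf n hn
      rw [newton]
      refine Subalgebra.sub_mem _ ?_ ?_
      · exact Subalgebra.mul_mem _ (Subalgebra.mul_mem _
          (Subalgebra.pow_mem _ (Subalgebra.neg_mem _ (Subalgebra.one_mem _)) _)
          (Subalgebra.natCast_mem _ _)) hesymm
      refine Subalgebra.sum_mem _ fun a ha => ?_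
      rw [Finset.mem_filter, Finset.HasAntidiagonal.mem_antidiagonal] at ha
      rw [Set.mem_Ioo] at ha
      have hsum := ha.1
      have h0 := ha.2.1
      have hlt := ha.2.2
      refine Subalgebra.mul_mem _ (Subalgebra.mul_mem _
        (Subalgebra.pow_mem _ (Subalgebra.neg_mem _ (Subalgebra.one_mem _)) _)
        ((ih a.1 hlt).2)) ((ih a.2 (by omega)).1)

lemma t_mem_Asub (hd : 1 ≤ d) (ht : IsTFamily d t) (k : ℕ) : t k ∈ Asub d t := by
  rw [tk_eq d t ht k]
  refine Subalgebra.sum_mem _ fun n _ => Subalgebra.mul_mem _ (C_mem_Asub d t _) ?_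
  rw [powSum_eq_psum]
  exact (psum_esymm_mem d t hd ht n).1

lemma symm_le_Asub (hd : 1 ≤ d) (ht : IsTFamily d t) :
    symmetricSubalgebra (Fin d) Kf ≤ Asub d t := by
  intro p hp
  obtain ⟨q, hq⟩ := (esymmAlgHom_fin_bijective Kf d).2 ⟨p, hp⟩
  have hval : p = aeval (fun i : Fin d => esymm (Fin d) Kf (i.val + 1)) q := by
    rw [← esymmAlgHom_apply, hq]
  rw [hval]
  have : aeval (fun i : Fin d => esymm (Fin d) Kf (i.val + 1)) q ∈
      Algebra.adjoin Kf (Set.range fun i : Fin d => esymm (Fin d) Kf (i.val + 1)) := by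
    rw [Algebra.adjoin_range_eq_range_aeval]
    exact ⟨q, rfl⟩
  refine Algebra.adjoin_le ?_ this
  rintro x ⟨i, rfl⟩
  exact (psum_esymm_mem d t hd ht (i.val + 1)).2

lemma Asub_eq_symm (hd : 1 ≤ d) (ht : IsTFamily d t) :
    Asub d t = symmetricSubalgebra (Fin d) Kf := by
  refine le_antisymm ?_ (symm_le_Asub d t hd ht)
  exact Algebra.adjoin_le (by rintro x ⟨i, rfl⟩; exact t_symm d t ht _)

end Main

/-- For every `k > d` there exists a unique polynomial `f_{k,d}` in `d` variables with
coefficients in `K` such that `𝔱_k = f_{k,d}(𝔱₁,…,𝔱_d)`. -/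
theorem stmt0 (d : ℕ) (hd : 1 ≤ d) (t : ℕ → MvPolynomial (Fin d) Kf)
    (ht : IsTFamily d t) (k : ℕ) (hk : d < k) :
    ∃! f : MvPolynomial (Fin d) Kf,
      MvPolynomial.aeval (fun i : Fin d => t (i.val + 1)) f = t k := by
  classical
  -- existence
  have hmem : t k ∈ (aeval (R := Kf) fun i : Fin d => t (i.val + 1)).range := by
    rw [← Algebra.adjoin_range_eq_range_aeval]
    exact t_mem_Asub d t hd ht k
  obtain ⟨f, hf⟩ := hmem
  -- injectivity of the evaluation map
  set S := symmetricSubalgebra (Fin d) Kf with hS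
  let τ : Fin d → S := fun i => ⟨t (i.val + 1), t_symm d t ht _⟩
  let φ : MvPolynomial (Fin d) Kf →ₐ[Kf] S := aeval (R := Kf) τ
  have hφcoe : ∀ p : MvPolynomial (Fin d) Kf,
      ((φ p : S) : MvPolynomial (Fin d) Kf) = aeval (fun i : Fin d => t (i.val + 1)) p :=
    fun p => (Subalgebra.mvPolynomial_aeval_coe S τ p).symm
  have hφsurj : Function.Surjective φ := by
    intro s
    have hs : (s : MvPolynomial (Fin d) Kf) ∈ Asub d t :=
      (Asub_eq_symm d t hd ht).symm ▸ s.2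
    rw [Asub, Algebra.adjoin_range_eq_range_aeval] at hs
    obtain ⟨p, hp⟩ := hs
    exact ⟨p, Subtype.ext (by rw [hφcoe]; exact hp)⟩
  let e : MvPolynomial (Fin d) Kf ≃ₐ[Kf] S :=
    esymmAlgEquiv (σ := Fin d) (R := Kf) (Fintype.card_fin d)
  let g : MvPolynomial (Fin d) Kf →ₐ[Kf] MvPolynomial (Fin d) Kf :=
    e.symm.toAlgHom.comp φ
  have hgsurj : Function.Surjective g := e.symm.surjective.comp hφsurj
  have hginj : Function.Injective g :=
    endo_injective (g : MvPolynomial (Fin d) Kf →+* MvPolynomial (Fin d) Kf) hgsurj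
  have hφinj : Function.Injective φ := by
    intro p q hpq
    exact hginj (by simp only [g, AlgHom.coe_comp, Function.comp_apply,
      AlgEquiv.toAlgHom_eq_coe, AlgHom.coe_coe, hpq])
  have hTinj : Function.Injective (aeval (fun i : Fin d => t (i.val + 1)) :
      MvPolynomial (Fin d) Kf →ₐ[Kf] MvPolynomial (Fin d) Kf) := by
    intro p q h
    exact hφinj (Subtype.ext (by rw [hφcoe, hφcoe]; exact h))
  have hf2 : (aeval (R := Kf) fun i : Fin d => t (i.val + 1)) f = t k := hf
  exact ⟨f, hf2, fun f' hf' => hTinj (by rw [hf', hf2])⟩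
end
end

section
/- The elements 𝔱₁, 𝔱₂, …, 𝔱_d of K[x₁,…,x_d] are algebraically independent over K. -/
open scoped BigOperators

noncomputable section

namespace StmtAux


open MvPolynomial

lemma aeval_congr_of_supported {K A : Type*} [CommSemiring K] [CommSemiring A] [Algebra K A]
    {σ : Type*} {s : Set σ} {p : MvPolynomial σ K} (hp : p ∈ MvPolynomial.supported K s)
    {f g : σ → A} (h : ∀ i ∈ s, f i = g i) :
    MvPolynomial.aeval f p = MvPolynomial.aeval g p := by
  rw [MvPolynomial.supported_eq_adjoin_X] at hp
  induction hp using Algebra.adjoin_induction with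
  | mem x hx =>
    obtain ⟨i, hi, rfl⟩ := hx
    simp [h i hi]
  | algebraMap r => simp
  | add x y _ _ hx hy => simp [hx, hy]
  | mul x y _ _ hx hy => simp [hx, hy]

/-- Triangular inverse substitution. -/
def Ginv {d : ℕ} {K : Type*} [Field K] (u : Fin d → K)
    (r : Fin d → MvPolynomial (Fin d) K) (k : ℕ) : MvPolynomial (Fin d) K :=
  if h : k < d then
    MvPolynomial.C (u ⟨k, h⟩)⁻¹ *
      (MvPolynomial.X ⟨k, h⟩ -
        MvPolynomial.aeval
          (fun i : Fin d => if _ : (i : ℕ) < k then Ginv u r i else 0) (r ⟨k, h⟩))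
  else 0
termination_by k

theorem triangular_algIndep {K A : Type*} [Field K] [CommRing A] [Nontrivial A] [Algebra K A]
    {d : ℕ} {v w : Fin d → A} {u : Fin d → K}
    (hv : AlgebraicIndependent K v) (hu : ∀ k, u k ≠ 0)
    (hw : ∀ k : Fin d, w k - algebraMap K A (u k) * v k ∈
      Algebra.adjoin K (v '' {i : Fin d | (i : ℕ) < (k : ℕ)})) :
    AlgebraicIndependent K w := by
  classical
  -- choose polynomial representatives
  have hrep : ∀ k : Fin d, ∃ r ∈ MvPolynomial.supported K {i : Fin d | (i : ℕ) < (k : ℕ)},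
      MvPolynomial.aeval v r = w k - algebraMap K A (u k) * v k := by
    intro k
    have h1 : Algebra.adjoin K (v '' {i : Fin d | (i : ℕ) < (k : ℕ)}) =
        (MvPolynomial.supported K {i : Fin d | (i : ℕ) < (k : ℕ)}).map (MvPolynomial.aeval v) := by
      rw [MvPolynomial.supported_eq_adjoin_X, AlgHom.map_adjoin, Set.image_image]
      simp
    have := hw k
    rw [h1] at this
    obtain ⟨r, hr1, hr2⟩ := this
    exact ⟨r, hr1, hr2⟩
  choose r hr1 hr2 using hrep
  set q : Fin d → MvPolynomial (Fin d) K :=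
    fun k => MvPolynomial.C (u k) * MvPolynomial.X k + r k with hq
  have hvq : ∀ k, MvPolynomial.aeval v (q k) = w k := by
    intro k
    simp only [hq, map_add, map_mul, MvPolynomial.aeval_C, MvPolynomial.aeval_X, hr2]
    ring
  have hcomp : (MvPolynomial.aeval w : MvPolynomial (Fin d) K →ₐ[K] A) =
      (MvPolynomial.aeval v).comp (MvPolynomial.aeval q) := by
    apply MvPolynomial.algHom_ext
    intro i
    simp [hvq]
  set G : Fin d → MvPolynomial (Fin d) K := fun i => Ginv u r (i : ℕ) with hG
  have hGq : ∀ k : Fin d, MvPolynomial.aeval G (q k) = MvPolynomial.X k := by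
    intro k
    have hrk : MvPolynomial.aeval G (r k) =
        MvPolynomial.aeval
          (fun i : Fin d => if _ : (i : ℕ) < (k : ℕ) then Ginv u r i else 0) (r k) := by
      apply aeval_congr_of_supported (hr1 k)
      intro i hi
      simp only [Set.mem_setOf_eq] at hi
      simp [hG, hi]
    have hGk : G k = MvPolynomial.C (u k)⁻¹ *
        (MvPolynomial.X k -
          MvPolynomial.aeval
            (fun i : Fin d => if _ : (i : ℕ) < (k : ℕ) then Ginv u r i else 0) (r k)) := by
      show Ginv u r (k : ℕ) = _
      rw [Ginv.eq_def, dif_pos k.isLt]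
    simp only [hq, map_add, map_mul, MvPolynomial.aeval_C, MvPolynomial.aeval_X]
    rw [hGk, hrk, MvPolynomial.algebraMap_eq, ← mul_assoc, ← MvPolynomial.C_mul, mul_inv_cancel₀ (hu k),
      MvPolynomial.C_1, one_mul, sub_add_cancel]
  have hinj : Function.Injective (MvPolynomial.aeval q : MvPolynomial (Fin d) K →ₐ[K] _) := by
    have : ((MvPolynomial.aeval G).comp (MvPolynomial.aeval q) :
        MvPolynomial (Fin d) K →ₐ[K] _) = AlgHom.id K _ := by
      apply MvPolynomial.algHom_ext
      intro i
      rw [AlgHom.comp_apply, MvPolynomial.aeval_X, AlgHom.id_apply]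
      exact hGq i
    intro a b hab
    have h2 := congrArg (MvPolynomial.aeval G) hab
    rwa [← AlgHom.comp_apply, ← AlgHom.comp_apply, this, AlgHom.id_apply, AlgHom.id_apply] at h2
  rw [algebraicIndependent_iff_injective_aeval, hcomp]
  exact ((algebraicIndependent_iff_injective_aeval.mp hv).comp hinj)



open MvPolynomial Finset

variable {K : Type*} [Field K] {d : ℕ}

/-- Subalgebra generated by `esymm 1, …, esymm n`. -/
def Esub (K : Type*) [Field K] (d n : ℕ) : Subalgebra K (MvPolynomial (Fin d) K) :=
  Algebra.adjoin K ((fun j => MvPolynomial.esymm (Fin d) K j) '' Set.Icc 1 n)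

lemma Esub_mono {n m : ℕ} (h : n ≤ m) : Esub K d n ≤ Esub K d m :=
  Algebra.adjoin_mono (Set.image_mono (Set.Icc_subset_Icc_right h))

lemma esymm_mem {j n : ℕ} (h1 : 1 ≤ j) (h2 : j ≤ n) :
    MvPolynomial.esymm (Fin d) K j ∈ Esub K d n :=
  Algebra.subset_adjoin ⟨j, Set.mem_Icc.2 ⟨h1, h2⟩, rfl⟩

lemma psum_mem (n : ℕ) : MvPolynomial.psum (Fin d) K n ∈ Esub K d n := by
  induction n using Nat.strong_induction_on with
  | _ n ih =>
    rcases Nat.eq_zero_or_pos n with rfl | hn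
    · rw [MvPolynomial.psum_zero]
      exact (Esub K d 0).natCast_mem _
    · rw [MvPolynomial.psum_eq_mul_esymm_sub_sum (Fin d) K n hn]
      refine sub_mem (mul_mem (mul_mem ?_ ?_) (esymm_mem hn le_rfl)) (Subalgebra.sum_mem _ ?_)
      · exact pow_mem (neg_mem (one_mem _)) _
      · exact (Esub K d n).natCast_mem _
      · intro a ha
        simp only [Finset.mem_filter, Finset.HasAntidiagonal.mem_antidiagonal, Set.mem_Ioo] at ha
        obtain ⟨hsum, h0, hlt⟩ := ha
        refine mul_mem (mul_mem (pow_mem (neg_mem (one_mem _)) _) ?_) ?_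
        · exact esymm_mem h0 (by omega)
        · exact Esub_mono (by omega) (ih a.2 (by omega))

lemma newton_diff (n : ℕ) (hn : 1 ≤ n) :
    MvPolynomial.psum (Fin d) K n - (-1) ^ (n + 1) * (n : MvPolynomial (Fin d) K) *
      MvPolynomial.esymm (Fin d) K n ∈ Esub K d (n - 1) := by
  rw [MvPolynomial.psum_eq_mul_esymm_sub_sum (Fin d) K n hn]
  rw [sub_right_comm, sub_self, zero_sub]
  refine neg_mem (Subalgebra.sum_mem _ ?_)
  intro a ha
  simp only [Finset.mem_filter, Finset.HasAntidiagonal.mem_antidiagonal, Set.mem_Ioo] at ha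
  obtain ⟨hsum, h0, hlt⟩ := ha
  refine mul_mem (mul_mem (pow_mem (neg_mem (one_mem _)) _) ?_) ?_
  · exact esymm_mem h0 (by omega)
  · exact Esub_mono (by omega : a.2 ≤ n - 1) (psum_mem a.2)

lemma algIndep_esymm :
    AlgebraicIndependent K (fun i : Fin d => MvPolynomial.esymm (Fin d) K (i + 1)) := by
  rw [algebraicIndependent_iff_injective_aeval]
  have hinj := MvPolynomial.esymmAlgHom_injective (σ := Fin d) (R := K) (n := d)
    (by simp)
  intro a b hab
  apply hinj
  apply Subtype.ext
  rw [MvPolynomial.esymmAlgHom_apply, MvPolynomial.esymmAlgHom_apply]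
  exact hab



instance : CharZero Kf :=
  charZero_of_injective_algebraMap
    (IsFractionRing.injective (MvPolynomial (Fin 2) ℚ) Kf)

lemma s₁_ne_zero : s₁ ≠ 0 := by
  simp only [s₁]
  rw [map_ne_zero_iff _ (IsFractionRing.injective (MvPolynomial (Fin 2) ℚ) Kf)]
  exact MvPolynomial.X_ne_zero _

lemma s₂_ne_zero : s₂ ≠ 0 := by
  simp only [s₂]
  rw [map_ne_zero_iff _ (IsFractionRing.injective (MvPolynomial (Fin 2) ℚ) Kf)]
  exact MvPolynomial.X_ne_zero _

def αc (s : Kf) (a : ℕ) : Kf := (if a = 0 then 1 else 0) - s ^ a / (a.factorial : Kf)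

def βc (i : ℕ) : Kf := ∑ ab ∈ Finset.HasAntidiagonal.antidiagonal i, αc s₁ ab.1 * αc s₂ ab.2

def γc (m j : ℕ) : Kf := (s₁ * s₂)⁻¹ * βc (m + 2 - j) * ((j.factorial : Kf))⁻¹

lemma αc_zero (s : Kf) : αc s 0 = 0 := by simp [αc]

lemma αc_one (s : Kf) : αc s 1 = -s := by simp [αc]

lemma βc_zero : βc 0 = 0 := by
  simp [βc, αc_zero]

lemma βc_one : βc 1 = 0 := by
  rw [βc, Finset.Nat.sum_antidiagonal_eq_sum_range_succ_mk]
  simp [Finset.sum_range_succ, αc_zero]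

lemma βc_two : βc 2 = s₁ * s₂ := by
  rw [βc, Finset.Nat.sum_antidiagonal_eq_sum_range_succ_mk]
  simp [Finset.sum_range_succ, αc_zero, αc_one]

lemma coeff_one_sub_expS (d : ℕ) (s : Kf) (a : ℕ) :
    PowerSeries.coeff a (1 - expS d s) = MvPolynomial.C (αc s a) := by
  rw [map_sub, αc, map_sub, PowerSeries.coeff_one]
  congr 1
  · split <;> simp
  · simp [expS, div_eq_mul_inv]

lemma tformula {d : ℕ} {t : ℕ → MvPolynomial (Fin d) Kf} (ht : IsTFamily d t) (m : ℕ) :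
    t m = ∑ ij ∈ Finset.HasAntidiagonal.antidiagonal (m + 2),
      MvPolynomial.C ((s₁ * s₂)⁻¹ * βc ij.1 * ((ij.2.factorial : Kf))⁻¹) * powSum d ij.2 := by
  have h := congrArg (PowerSeries.coeff (m + 2)) ht
  rw [PowerSeries.coeff_mk] at h
  simp only [show 2 ≤ m + 2 by omega, if_true, Nat.add_sub_cancel] at h
  rw [PowerSeries.coeff_C_mul, PowerSeries.coeff_mul] at h
  rw [h, Finset.mul_sum]
  apply Finset.sum_congr rfl
  intro ij _
  rw [PowerSeries.coeff_mul, Finset.sum_mul, Finset.mul_sum]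
  have : ∀ ab ∈ Finset.HasAntidiagonal.antidiagonal ij.1,
      MvPolynomial.C (1 / (s₁ * s₂)) *
        (PowerSeries.coeff ab.1 (1 - expS d s₁) * PowerSeries.coeff ab.2 (1 - expS d s₂) *
          PowerSeries.coeff ij.2 (psumS d)) =
      MvPolynomial.C ((s₁ * s₂)⁻¹ * (αc s₁ ab.1 * αc s₂ ab.2) * ((ij.2.factorial : Kf))⁻¹) *
        powSum d ij.2 := by
    intro ab _
    rw [coeff_one_sub_expS, coeff_one_sub_expS]
    simp only [psumS, PowerSeries.coeff_mk]
    rw [one_div]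
    simp only [map_mul]
    ring
  rw [Finset.sum_congr rfl this, ← Finset.sum_mul]
  congr 1
  rw [← map_sum]
  congr 1
  simp only [βc, Finset.mul_sum, Finset.sum_mul]

lemma tformula' {d : ℕ} {t : ℕ → MvPolynomial (Fin d) Kf} (ht : IsTFamily d t) (m : ℕ) :
    t m = ∑ j ∈ Finset.range (m + 1), MvPolynomial.C (γc m j) * powSum d j := by
  rw [tformula ht m, Finset.Nat.sum_antidiagonal_eq_sum_range_succ_mk]
  rw [Finset.sum_range_succ', Finset.sum_range_succ']
  have h0 : MvPolynomial.C ((s₁ * s₂)⁻¹ * βc 0 * (((m + 2 - 0).factorial : Kf))⁻¹) *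
      powSum d (m + 2 - 0) = 0 := by
    rw [βc_zero]; simp
  have h1 : MvPolynomial.C ((s₁ * s₂)⁻¹ * βc (0 + 1) * (((m + 2 - (0 + 1)).factorial : Kf))⁻¹) *
      powSum d (m + 2 - (0 + 1)) = 0 := by
    rw [show (0 + 1 : ℕ) = 1 by rfl, βc_one]; simp
  rw [h0, h1, add_zero, add_zero]
  rw [← Finset.sum_range_reflect (fun j => MvPolynomial.C (γc m j) * powSum d j) (m + 1)]
  apply Finset.sum_congr rfl
  intro i hi
  rw [Finset.mem_range] at hi
  have e1 : m + 1 - 1 - i = m - i := by omega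
  have e2 : m + 2 - (i + 1 + 1) = m - i := by omega
  have e3 : m + 2 - (m - i) = i + 2 := by omega
  simp only [e1, γc, e3, e2]

lemma γc_diag (m : ℕ) : γc m m = ((m.factorial : Kf))⁻¹ := by
  rw [γc, show m + 2 - m = 2 by omega, βc_two,
    inv_mul_cancel₀ (mul_ne_zero s₁_ne_zero s₂_ne_zero), one_mul]


end StmtAux

/-- The elements `𝔱₁, …, 𝔱_d` of `K[x₁,…,x_d]` are algebraically independent over `K`. -/
theorem stmt1 (d : ℕ) (hd : 1 ≤ d) (t : ℕ → MvPolynomial (Fin d) Kf)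
    (ht : IsTFamily d t) :
    AlgebraicIndependent Kf (fun i : Fin d => t (i.val + 1)) := by
  classical
  set v : Fin d → MvPolynomial (Fin d) Kf :=
    fun i => MvPolynomial.esymm (Fin d) Kf (i.val + 1) with hv_def
  set u : Fin d → Kf := fun k =>
    StmtAux.γc (k.val + 1) (k.val + 1) *
      ((-1 : Kf) ^ (k.val + 1 + 1) * ((k.val + 1 : ℕ) : Kf)) with hu_def
  have hu : ∀ k : Fin d, u k ≠ 0 := by
    intro k
    rw [hu_def]
    simp only [StmtAux.γc_diag]
    apply mul_ne_zero
    · exact inv_ne_zero (Nat.cast_ne_zero.2 (Nat.factorial_ne_zero _))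
    · exact mul_ne_zero (pow_ne_zero _ (neg_ne_zero.2 one_ne_zero))
        (Nat.cast_ne_zero.2 (Nat.succ_ne_zero _))
  have powSum_eq : ∀ n : ℕ, powSum d n = MvPolynomial.psum (Fin d) Kf n := fun _ => rfl
  have hw : ∀ k : Fin d, t (k.val + 1) - algebraMap Kf (MvPolynomial (Fin d) Kf) (u k) * v k ∈
      Algebra.adjoin Kf (v '' {i : Fin d | (i : ℕ) < (k : ℕ)}) := by
    intro k
    have hE : StmtAux.Esub Kf d k.val ≤
        Algebra.adjoin Kf (v '' {i : Fin d | (i : ℕ) < (k : ℕ)}) := by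
      apply Algebra.adjoin_mono
      rintro p ⟨j, hj, rfl⟩
      rw [Set.mem_Icc] at hj
      refine ⟨⟨j - 1, by omega⟩, (by omega : j - 1 < k.val), ?_⟩
      rw [hv_def]
      simp only
      congr 1
      omega
    set n : ℕ := k.val + 1 with hn
    have key : t n - algebraMap Kf (MvPolynomial (Fin d) Kf) (u k) * v k =
        MvPolynomial.C (StmtAux.γc n n) *
          (MvPolynomial.psum (Fin d) Kf n -
            (-1) ^ (n + 1) * (n : MvPolynomial (Fin d) Kf) *
              MvPolynomial.esymm (Fin d) Kf n) +
        ∑ j ∈ Finset.range n, MvPolynomial.C (StmtAux.γc n j) *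
          MvPolynomial.psum (Fin d) Kf j := by
      rw [StmtAux.tformula' ht n, Finset.sum_range_succ]
      simp only [powSum_eq, hu_def, hv_def, MvPolynomial.algebraMap_eq, map_mul, map_pow,
        map_neg, map_one, map_natCast]
      simp only [hn]
      push_cast
      ring
    rw [key]
    refine add_mem (hE ?_) (hE (Subalgebra.sum_mem _ ?_))
    · refine mul_mem ?_ ?_
      · rw [← MvPolynomial.algebraMap_eq]
        exact Subalgebra.algebraMap_mem _ _
      · have := StmtAux.newton_diff (K := Kf) (d := d) n (by omega)
        rwa [show n - 1 = k.val by omega] at this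
    · intro j hj
      rw [Finset.mem_range] at hj
      refine mul_mem ?_ (StmtAux.Esub_mono (by omega) (StmtAux.psum_mem j))
      rw [← MvPolynomial.algebraMap_eq]
      exact Subalgebra.algebraMap_mem _ _
  exact StmtAux.triangular_algIndep StmtAux.algIndep_esymm hu hw
end
end

section
/- For every integer d ≥ 1, the following identity of integers holds: Σ_{a=0}^{d−1} (−1)^a · binom(d−1, a) · [ (−1)^d·(d−a)^{d+1} + (−1)^{d+1}·(d−1−a)^{d+1} + a^{d+1} − (a+1)^{d+1} ] = (−1)^d · d · (d+1)!. -/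
open scoped BigOperators

open Finset Function fwdDiff

lemma fwdDiff_pow_expand (k : ℕ) :
    Δ_[(1:ℤ)] (fun x : ℤ ↦ x ^ k)
      = ∑ j ∈ range k, (k.choose j : ℤ) • (fun x : ℤ ↦ x ^ j) := by
  ext x
  simp only [fwdDiff, Finset.sum_apply, Pi.smul_apply, smul_eq_mul]
  rw [add_pow]
  rw [Finset.sum_range_succ]
  simp [mul_comm]

lemma fwdDiff_iter_pow (n : ℕ) : ∀ k ≤ n,
    (Δ_[(1:ℤ)])^[n] (fun x : ℤ ↦ x ^ k)
      = fun _ ↦ if k = n then (n.factorial : ℤ) else 0 := by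
  induction n with
  | zero =>
    intro k hk
    interval_cases k
    simp
  | succ n IH =>
    intro k hk
    rw [Function.iterate_succ_apply, fwdDiff_pow_expand, fwdDiff_iter_finset_sum]
    have hterm : ∀ j ∈ range k,
        (Δ_[(1:ℤ)])^[n] ((k.choose j : ℤ) • (fun x : ℤ ↦ x ^ j))
          = fun _ ↦ (k.choose j : ℤ) * (if j = n then (n.factorial : ℤ) else 0) := by
      intro j hj
      have hj' := Finset.mem_range.mp hj
      rw [fwdDiff_iter_const_smul, IH j (by omega : j ≤ n)]
      ext x; simp
    rw [Finset.sum_congr rfl hterm]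
    ext x
    rw [Finset.sum_apply]
    rcases eq_or_ne k (n + 1) with rfl | hne
    · rw [Finset.sum_eq_single n]
      · simp only [if_pos rfl, Nat.choose_succ_self_right, Nat.factorial_succ]
        push_cast
        ring
      · intro b _ hb; simp [hb]
      · intro h; simp at h
    · have : ∀ j ∈ range k, ((k.choose j : ℤ) * (if j = n then (n.factorial : ℤ) else 0)) = 0 := by
        intro j hj
        rw [Finset.mem_range] at hj
        have : j ≠ n := by omega
        simp [this]
      rw [Finset.sum_congr rfl this]
      simp [hne]

lemma fwdDiff_comp_add' (f : ℤ → ℤ) (c : ℤ) :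
    Δ_[(1:ℤ)] (fun x ↦ f (x + c)) = fun x ↦ Δ_[(1:ℤ)] f (x + c) := by
  ext x
  show f (x + 1 + c) - f (x + c) = f (x + c + 1) - f (x + c)
  rw [add_right_comm]

lemma fwdDiff_iter_comp_add' (f : ℤ → ℤ) (c : ℤ) (n : ℕ) :
    (Δ_[(1:ℤ)])^[n] (fun x ↦ f (x + c)) = fun x ↦ (Δ_[(1:ℤ)])^[n] f (x + c) := by
  induction n generalizing f with
  | zero => simp
  | succ n IH =>
    rw [Function.iterate_succ_apply, Function.iterate_succ_apply, fwdDiff_comp_add', IH]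

/-- `F n x = (x+1)^(n+2) - x^(n+2)`. -/
private def Ff (n : ℕ) : ℤ → ℤ := fun x ↦ (x + 1) ^ (n + 2) - x ^ (n + 2)

/-- `G n x = F n (x - (n+1)) - F n x`. -/
private def Gf (n : ℕ) : ℤ → ℤ := fun x ↦ Ff n (x + (-(n + 1 : ℤ))) - Ff n x

private lemma aux (n : ℕ) :
    ∑ a ∈ Finset.range (n + 1), (-1 : ℤ) ^ a * (n.choose a : ℤ) * Gf n a
      = (-1 : ℤ) ^ (n + 1) * (n + 1) * ((n + 2).factorial : ℤ) := by
  -- the sum equals `(-1)^n * Δ^[n] (Gf n) 0`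
  have hshift := fwdDiff_iter_eq_sum_shift (1 : ℤ) (Gf n) n 0
  have hsum : ∑ a ∈ Finset.range (n + 1), (-1 : ℤ) ^ a * (n.choose a : ℤ) * Gf n a
      = (-1 : ℤ) ^ n * (Δ_[(1:ℤ)])^[n] (Gf n) 0 := by
    rw [hshift, Finset.mul_sum]
    refine Finset.sum_congr rfl fun k hk ↦ ?_
    have hk' : k ≤ n := by have := Finset.mem_range.mp hk; omega
    have hnk : (-1 : ℤ) ^ (n - k) * (-1) ^ k = (-1) ^ n := by
      rw [← pow_add, Nat.sub_add_cancel hk']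
    have hw : (-1 : ℤ) ^ (n - k) * (-1 : ℤ) ^ (n - k) = 1 := by
      rw [← pow_add]
      exact Even.neg_one_pow ⟨n - k, rfl⟩
    have harg : (0 : ℤ) + k • (1 : ℤ) = (k : ℤ) := by simp
    rw [harg, smul_eq_mul, ← hnk]
    linear_combination (-((-1 : ℤ) ^ k * (n.choose k : ℤ) * Gf n k)) * hw
  -- Δ^[n] (Gf n) 0 in terms of Δ^[n+1] p
  have hF : Ff n = Δ_[(1:ℤ)] (fun x : ℤ ↦ x ^ (n + 2)) := by
    ext x; rfl
  have hG : Gf n = (fun x ↦ Ff n (x + (-(n + 1 : ℤ)))) + (-1 : ℤ) • Ff n := by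
    ext x; simp [Gf]; ring
  have hΔG : (Δ_[(1:ℤ)])^[n] (Gf n) 0
      = (Δ_[(1:ℤ)])^[n + 1] (fun x : ℤ ↦ x ^ (n + 2)) (-(n + 1 : ℤ))
        - (Δ_[(1:ℤ)])^[n + 1] (fun x : ℤ ↦ x ^ (n + 2)) 0 := by
    rw [hG, fwdDiff_iter_add, fwdDiff_iter_const_smul, fwdDiff_iter_comp_add']
    simp only [Pi.add_apply, Pi.smul_apply, smul_eq_mul]
    rw [hF, ← Function.iterate_succ_apply]
    simp only [Nat.succ_eq_add_one, zero_add]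
    ring
  -- telescoping
  have key : ∀ y : ℤ, (Δ_[(1:ℤ)])^[n + 1] (fun x : ℤ ↦ x ^ (n + 2)) (y + 1)
      - (Δ_[(1:ℤ)])^[n + 1] (fun x : ℤ ↦ x ^ (n + 2)) y = ((n + 2).factorial : ℤ) := by
    intro y
    have h := congrFun (fwdDiff_iter_pow (n + 2) (n + 2) le_rfl) y
    rw [if_pos rfl, Function.iterate_succ_apply'] at h
    simpa [fwdDiff] using h
  have tele := Finset.sum_range_sub
    (fun j : ℕ ↦ (Δ_[(1:ℤ)])^[n + 1] (fun x : ℤ ↦ x ^ (n + 2)) (-(n + 1 : ℤ) + j)) (n + 1)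
  have hterm : ∀ j ∈ Finset.range (n + 1),
      (Δ_[(1:ℤ)])^[n + 1] (fun x : ℤ ↦ x ^ (n + 2)) (-(n + 1 : ℤ) + (j + 1 : ℕ))
        - (Δ_[(1:ℤ)])^[n + 1] (fun x : ℤ ↦ x ^ (n + 2)) (-(n + 1 : ℤ) + j)
        = ((n + 2).factorial : ℤ) := by
    intro j _
    have harg : (-(n + 1 : ℤ) + (j + 1 : ℕ)) = (-(n + 1 : ℤ) + j) + 1 := by push_cast; ring
    rw [harg, key]
  rw [Finset.sum_congr rfl hterm, Finset.sum_const, Finset.card_range] at tele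
  have h0 : (-(n + 1 : ℤ) + ((n + 1 : ℕ) : ℤ)) = 0 := by push_cast; ring
  have h00 : (-(n + 1 : ℤ) + ((0 : ℕ) : ℤ)) = -(n + 1 : ℤ) := by push_cast; ring
  rw [h0, h00] at tele
  rw [hsum, hΔG]
  have : (Δ_[(1:ℤ)])^[n + 1] (fun x : ℤ ↦ x ^ (n + 2)) (-(n + 1 : ℤ))
      = (Δ_[(1:ℤ)])^[n + 1] (fun x : ℤ ↦ x ^ (n + 2)) 0
        - (n + 1 : ℤ) * ((n + 2).factorial : ℤ) := by
    have := tele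
    simp only [nsmul_eq_mul] at this
    push_cast at this ⊢
    linarith
  rw [this]
  ring

/-- The integer identity
`Σ_{a=0}^{d−1} (−1)^a · C(d−1,a) · [(−1)^d (d−a)^{d+1} + (−1)^{d+1} (d−1−a)^{d+1}
  + a^{d+1} − (a+1)^{d+1}] = (−1)^d · d · (d+1)!`,
the computational content of the evaluation `⟨τ_{d−1}, C_{(d[0])}⟩ = 1/d!`. -/
theorem stmt7 (d : ℕ) (hd : 1 ≤ d) :
    ∑ a ∈ Finset.range d, (-1 : ℤ) ^ a * ((d - 1).choose a : ℤ) *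
        ((-1) ^ d * ((d : ℤ) - a) ^ (d + 1) + (-1) ^ (d + 1) * ((d : ℤ) - 1 - a) ^ (d + 1)
          + (a : ℤ) ^ (d + 1) - ((a : ℤ) + 1) ^ (d + 1))
      = (-1) ^ d * d * ((d + 1).factorial : ℤ) := by
  obtain ⟨n, rfl⟩ : ∃ n, d = n + 1 := ⟨d - 1, by omega⟩
  have hbr : ∀ a ∈ Finset.range (n + 1),
      (-1 : ℤ) ^ a * ((n + 1 - 1).choose a : ℤ) *
        ((-1) ^ (n + 1) * (((n + 1 : ℕ) : ℤ) - a) ^ (n + 1 + 1)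
          + (-1) ^ (n + 1 + 1) * (((n + 1 : ℕ) : ℤ) - 1 - a) ^ (n + 1 + 1)
          + (a : ℤ) ^ (n + 1 + 1) - ((a : ℤ) + 1) ^ (n + 1 + 1))
      = (-1 : ℤ) ^ a * (n.choose a : ℤ) * Gf n a := by
    intro a _
    have h1 : (((n + 1 : ℕ) : ℤ) - a) ^ (n + 2)
        = (-1 : ℤ) ^ (n + 2) * ((a : ℤ) - (n + 1)) ^ (n + 2) := by
      rw [show (((n + 1 : ℕ) : ℤ) - a) = -((a : ℤ) - (n + 1)) by push_cast; ring, neg_pow]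
    have h2 : (((n + 1 : ℕ) : ℤ) - 1 - a) ^ (n + 2)
        = (-1 : ℤ) ^ (n + 2) * ((a : ℤ) - (n + 1) + 1) ^ (n + 2) := by
      rw [show (((n + 1 : ℕ) : ℤ) - 1 - a) = -((a : ℤ) - (n + 1) + 1) by push_cast; ring, neg_pow]
    have s1 : (-1 : ℤ) ^ (n + 1) * (-1) ^ (n + 2) = -1 := by
      rw [← pow_add]; exact Odd.neg_one_pow ⟨n + 1, by ring⟩
    have s2 : (-1 : ℤ) ^ (n + 2) * (-1) ^ (n + 2) = 1 := by
      rw [← pow_add]; exact Even.neg_one_pow ⟨n + 2, by ring⟩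
    simp only [Nat.add_sub_cancel, Gf, Ff]
    linear_combination ((-1 : ℤ) ^ a * (n.choose a : ℤ) * (-1 : ℤ) ^ (n + 1)) * h1
      + ((-1 : ℤ) ^ a * (n.choose a : ℤ) * (-1 : ℤ) ^ (n + 2)) * h2
      + ((-1 : ℤ) ^ a * (n.choose a : ℤ) * ((a : ℤ) - (n + 1)) ^ (n + 2)) * s1
      + ((-1 : ℤ) ^ a * (n.choose a : ℤ) * ((a : ℤ) - (n + 1) + 1) ^ (n + 2)) * s2
  rw [Finset.sum_congr rfl hbr, aux n]
  push_cast
  ring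
end

section
/- Let d ≥ 1 and let c₁,…,c_d be rational numbers. Define f(k) = Σ_{i=1}^{d} c_i · i^{k+1} for integers k ≥ 0. If f(0) = f(1) = ⋯ = f(d−2) = 0 and f(d−1) = 1, then f(d) = d(d+1)/2. -/
open scoped BigOperators

open Polynomial Finset

private lemma gauss_q (d : ℕ) : ∑ j ∈ Finset.Icc 1 d, (j : ℚ) = d * (d + 1) / 2 := by
  induction d with
  | zero => simp
  | succ n ih =>
    rw [← Finset.insert_Icc_right_eq_Icc_add_one (by omega), Finset.sum_insert (by simp)]
    rw [ih]; push_cast; ring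

/-- Interpolation lemma: if `f(k) = Σ_{i=1}^{d} c_i · i^{k+1}` vanishes at
`k = 0, …, d−2` and `f(d−1) = 1`, then `f(d) = d(d+1)/2`. -/
theorem stmt8 (d : ℕ) (hd : 1 ≤ d) (c : ℕ → ℚ) (f : ℕ → ℚ)
    (hf : ∀ k, f k = ∑ i ∈ Finset.Icc 1 d, c i * (i : ℚ) ^ (k + 1))
    (h0 : ∀ k < d - 1, f k = 0) (h1 : f (d - 1) = 1) :
    f d = d * (d + 1) / 2 := by
  set b : ℕ → ℚ := fun i => c i * i with hb
  have key : ∀ k, f k = ∑ i ∈ Finset.Icc 1 d, b i * (i : ℚ) ^ k := by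
    intro k
    rw [hf]
    refine Finset.sum_congr rfl fun i hi => ?_
    simp only [hb, pow_succ']
    ring
  set P : ℚ[X] := ∏ j ∈ Finset.Icc 1 d, (X - C (j : ℚ)) with hP
  have hPmonic : P.Monic := monic_prod_of_monic _ _ fun i _ => monic_X_sub_C _
  have hPdeg : P.natDegree = d := by
    rw [hP, natDegree_prod _ _ fun i _ => X_sub_C_ne_zero _]
    have hx : ∀ x : ℕ, ((X : ℚ[X]) - (x : ℚ[X])).natDegree = 1 := fun x => by
      rw [← Polynomial.C_eq_natCast]; exact natDegree_X_sub_C _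
    simp [hx, Nat.card_Icc]
  set Q : ℚ[X] := X ^ d - P with hQ
  have hQdeg : Q.natDegree < d := by
    rcases eq_or_ne Q 0 with h | h
    · simpa [h] using (by omega : 0 < d)
    · rw [Polynomial.natDegree_lt_iff_degree_lt h]
      have h1 : (X ^ d : ℚ[X]).degree = P.degree := by
        rw [degree_X_pow, Polynomial.degree_eq_natDegree hPmonic.ne_zero, hPdeg]
      have h2 : (X ^ d : ℚ[X]).leadingCoeff = P.leadingCoeff := by
        rw [Polynomial.leadingCoeff_X_pow, hPmonic.leadingCoeff]
      have := Polynomial.degree_sub_lt h1 (Polynomial.monic_X_pow d).ne_zero h2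
      rwa [degree_X_pow] at this
  have hcoeff : Q.coeff (d - 1) = d * (d + 1) / 2 := by
    have hnext : P.nextCoeff = -∑ j ∈ Finset.Icc 1 d, (j : ℚ) :=
      prod_X_sub_C_nextCoeff _
    have hPc : P.coeff (d - 1) = -(d * (d + 1) / 2) := by
      rw [Polynomial.nextCoeff_of_natDegree_pos (by omega : 0 < P.natDegree), hPdeg] at hnext
      rw [hnext, gauss_q]
    rw [hQ, Polynomial.coeff_sub, Polynomial.coeff_X_pow, if_neg (by omega), hPc]
    ring
  have heval : ∀ i ∈ Finset.Icc 1 d, Q.eval (i : ℚ) = (i : ℚ) ^ d := by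
    intro i hi
    rw [hQ, Polynomial.eval_sub, Polynomial.eval_pow, Polynomial.eval_X, hP,
      Polynomial.eval_prod]
    rw [Finset.prod_eq_zero hi (by simp)]
    ring
  have hevalsum : ∀ x : ℚ, Q.eval x = ∑ k ∈ Finset.range d, Q.coeff k * x ^ k :=
    fun x => Polynomial.eval_eq_sum_range' hQdeg x
  calc f d = ∑ i ∈ Finset.Icc 1 d, b i * Q.eval (i : ℚ) := by
        rw [key d]
        exact Finset.sum_congr rfl fun i hi => by rw [heval i hi]
    _ = ∑ i ∈ Finset.Icc 1 d, ∑ k ∈ Finset.range d, Q.coeff k * (b i * (i : ℚ) ^ k) := by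
        refine Finset.sum_congr rfl fun i hi => ?_
        rw [hevalsum, Finset.mul_sum]
        exact Finset.sum_congr rfl fun k _ => by ring
    _ = ∑ k ∈ Finset.range d, Q.coeff k * f k := by
        rw [Finset.sum_comm]
        refine Finset.sum_congr rfl fun k _ => ?_
        rw [key k, Finset.mul_sum]
    _ = Q.coeff (d - 1) * f (d - 1) := by
        refine Finset.sum_eq_single_of_mem (d - 1) (Finset.mem_range.mpr (by omega))
          (fun k hk hne => ?_)
        rw [h0 k (by rw [Finset.mem_range] at hk; omega)]; ring
    _ = d * (d + 1) / 2 := by rw [hcoeff, h1, mul_one]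
end

section
/- For every integer m ≥ 0 and every rational number x with x ∉ {0, −1, −2, …, −m}, the identity Σ_{i=0}^{m} (−1)^i · binom(m, i) · 1/(x+i)² = ( m! / ∏_{j=0}^{m} (x+j) ) · Σ_{j=0}^{m} 1/(x+j) holds. -/
open scoped BigOperators

lemma alt_sum (m : ℕ) (f : ℕ → ℚ) :
    ∑ i ∈ Finset.range (m + 2), (-1 : ℚ) ^ i * ((m + 1).choose i : ℚ) * f i
      = ∑ i ∈ Finset.range (m + 1), (-1 : ℚ) ^ i * (m.choose i : ℚ) * f i
        - ∑ i ∈ Finset.range (m + 1), (-1 : ℚ) ^ i * (m.choose i : ℚ) * f (i + 1) := by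
  rw [Finset.sum_range_succ' _ (m + 1), Finset.sum_range_succ'
    (fun i => (-1 : ℚ) ^ i * (m.choose i : ℚ) * f i) m]
  have h1 : ∀ i ∈ Finset.range (m + 1),
      (-1 : ℚ) ^ (i + 1) * ((m + 1).choose (i + 1) : ℚ) * f (i + 1)
        = (-1 : ℚ) ^ (i + 1) * ((m.choose i : ℚ) + (m.choose (i + 1) : ℚ)) * f (i + 1) := by
    intro i _
    rw [Nat.choose_succ_succ]
    push_cast
    ring
  rw [Finset.sum_congr rfl h1]
  have h2 : ∑ i ∈ Finset.range (m + 1),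
      (-1 : ℚ) ^ (i + 1) * ((m.choose i : ℚ) + (m.choose (i + 1) : ℚ)) * f (i + 1)
        = (∑ i ∈ Finset.range (m + 1), (-1 : ℚ) ^ (i + 1) * (m.choose i : ℚ) * f (i + 1))
          + ∑ i ∈ Finset.range (m + 1), (-1 : ℚ) ^ (i + 1) * (m.choose (i + 1) : ℚ) * f (i + 1) := by
    rw [← Finset.sum_add_distrib]
    exact Finset.sum_congr rfl fun i _ => by ring
  rw [h2, Finset.sum_range_succ (fun i => (-1 : ℚ) ^ (i + 1) * (m.choose (i + 1) : ℚ) * f (i + 1)) m]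
  simp only [Nat.choose_succ_self, Nat.cast_zero, Nat.choose_zero_right, Nat.cast_one]
  have h3 : ∑ i ∈ Finset.range (m + 1), (-1 : ℚ) ^ (i + 1) * (m.choose i : ℚ) * f (i + 1)
      = -∑ i ∈ Finset.range (m + 1), (-1 : ℚ) ^ i * (m.choose i : ℚ) * f (i + 1) := by
    rw [← Finset.sum_neg_distrib]
    exact Finset.sum_congr rfl fun i _ => by ring
  rw [h3]
  ring

/-- The binomial sum identity
`Σ_{i=0}^{m} (−1)^i C(m,i)/(x+i)² = (m! / ∏_{j=0}^{m} (x+j)) · Σ_{j=0}^{m} 1/(x+j)`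
for rational `x ∉ {0, −1, …, −m}`. -/
theorem stmt10 (m : ℕ) (x : ℚ) (hx : ∀ j ≤ m, x + j ≠ 0) :
    ∑ i ∈ Finset.range (m + 1), (-1 : ℚ) ^ i * (m.choose i : ℚ) / (x + i) ^ 2
      = ((m.factorial : ℚ) / ∏ j ∈ Finset.range (m + 1), (x + j)) *
          ∑ j ∈ Finset.range (m + 1), 1 / (x + j) := by
  induction m generalizing x with
  | zero =>
      have h0 : x + (0 : ℕ) ≠ 0 := hx 0 le_rfl
      simp only [Nat.cast_zero, add_zero] at h0 ⊢
      simp [Finset.sum_range_one, Finset.prod_range_one]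
      field_simp
  | succ m ih =>
      have hx0 : x ≠ 0 := by
        have := hx 0 (Nat.zero_le _); simpa using this
      have hc : x + (m + 1 : ℚ) ≠ 0 := by
        have := hx (m + 1) le_rfl; push_cast at this ⊢; exact this
      -- rewrite LHS via alt_sum
      have key : ∑ i ∈ Finset.range (m + 2), (-1 : ℚ) ^ i * ((m + 1).choose i : ℚ) / (x + i) ^ 2
          = ∑ i ∈ Finset.range (m + 1), (-1 : ℚ) ^ i * (m.choose i : ℚ) / (x + i) ^ 2
            - ∑ i ∈ Finset.range (m + 1), (-1 : ℚ) ^ i * (m.choose i : ℚ) / ((x + 1) + i) ^ 2 := by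
        have := alt_sum m (fun i => 1 / (x + i) ^ 2)
        simp only [mul_one_div] at this
        rw [this]
        congr 1
        apply Finset.sum_congr rfl
        intro i _
        push_cast
        ring_nf
      rw [key]
      have hxm : ∀ j ≤ m, x + (j : ℚ) ≠ 0 := fun j hj => hx j (Nat.le_succ_of_le hj)
      have hxm1 : ∀ j ≤ m, (x + 1) + (j : ℚ) ≠ 0 := by
        intro j hj
        have hne := hx (j + 1) (by omega)
        have e : (x + 1) + (j : ℚ) = x + ((j + 1 : ℕ) : ℚ) := by push_cast; ring
        rw [e]; exact hne
      rw [ih x hxm, ih (x + 1) hxm1]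
      -- product and sum relations
      set p := ∏ j ∈ Finset.range (m + 1), (x + j) with hp
      set q := ∏ j ∈ Finset.range (m + 1), ((x + 1) + j) with hq
      set h := ∑ j ∈ Finset.range (m + 1), 1 / (x + j) with hh
      have hpne : p ≠ 0 := Finset.prod_ne_zero_iff.mpr fun j hj =>
        hxm j (Nat.lt_succ_iff.mp (Finset.mem_range.mp hj))
      have hqne : q ≠ 0 := Finset.prod_ne_zero_iff.mpr fun j hj =>
        hxm1 j (Nat.lt_succ_iff.mp (Finset.mem_range.mp hj))
      have hP1 : ∏ j ∈ Finset.range (m + 2), (x + j) = p * (x + (m + 1 : ℚ)) := by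
        rw [Finset.prod_range_succ]
        push_cast
        ring
      have hP2 : ∏ j ∈ Finset.range (m + 2), (x + j) = x * q := by
        rw [Finset.prod_range_succ' (fun j => (x + (j : ℚ)))]
        have e : ∀ j ∈ Finset.range (m + 1), (x + ((j + 1 : ℕ) : ℚ)) = (x + 1) + j := by
          intro j _; push_cast; ring
        rw [Finset.prod_congr rfl e]
        rw [← hq]
        simp [mul_comm]
      have hH1 : ∑ j ∈ Finset.range (m + 2), 1 / (x + j) = h + 1 / (x + (m + 1 : ℚ)) := by
        rw [Finset.sum_range_succ]
        push_cast
        rw [← hh]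
      have hH2 : ∑ j ∈ Finset.range (m + 1), 1 / ((x + 1) + j)
          = h + 1 / (x + (m + 1 : ℚ)) - 1 / x := by
        have e : ∑ j ∈ Finset.range (m + 2), 1 / (x + j)
            = (∑ j ∈ Finset.range (m + 1), 1 / (x + (j + 1 : ℕ))) + 1 / (x + (0 : ℕ)) := by
          exact Finset.sum_range_succ' (fun j => 1 / (x + (j : ℚ))) (m + 1)
        rw [hH1] at e
        have e2 : ∑ j ∈ Finset.range (m + 1), 1 / (x + (j + 1 : ℕ))
            = ∑ j ∈ Finset.range (m + 1), 1 / ((x + 1) + j) := by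
          apply Finset.sum_congr rfl
          intro j _
          push_cast
          ring_nf
        rw [e2] at e
        push_cast at e
        simp only [add_zero] at e
        linarith [e]
      rw [hP1, hH1, hH2]
      have hqx : x * q = p * (x + (m + 1 : ℚ)) := by rw [← hP2, hP1]
      have hfac : ((m + 1).factorial : ℚ) = (m + 1 : ℚ) * (m.factorial : ℚ) := by
        rw [Nat.factorial_succ]; push_cast; ring
      have hq' : q = p * (x + (m + 1 : ℚ)) / x := by
        rw [eq_div_iff hx0]
        linear_combination hqx
      rw [hq', hfac]
      field_simp
      ring
end

section
/- For every integer k ≥ 2 and all positive integers m₁,…,m_k, the recurrence G(m₁,…,m_k) = m_k²·(m₁ + ⋯ + m_k)^{k−2} + Σ_{j=1}^{k−1} m_j · G(m₁,…,m_{j−1}, m_j + m_k, m_{j+1},…,m_{k−1}) holds, where in the j-th summand the sequence has k−1 entries, obtained from (m₁,…,m_{k−1}) by replacing m_j with m_j + m_k. -/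
open scoped BigOperators Classical

noncomputable section

/-- `f : {1,…,l} → {1,…,l}` has only one periodic orbit: its set of periodic points forms
a single orbit of `f`. -/
def OnePeriodicOrbit {l : ℕ} (f : Fin l → Fin l) : Prop :=
  ∃ x, Function.periodicPts f = Set.range fun n => f^[n] x

/-- `G(m₁,…,m_l) = Σ_f Π_i m_{f(i)}`, the sum over all functions
`f : {1,…,l} → {1,…,l}` with only one periodic orbit. -/
def G {l : ℕ} (m : Fin l → ℕ) : ℚ :=
  ∑ f : Fin l → Fin l, if OnePeriodicOrbit f then ∏ i, (m (f i) : ℚ) else 0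

namespace OPOAux

open Function

variable {k : ℕ}

/-- The target map of the contraction of the vertex `last`. -/
def phi (j : Fin k) (y : Fin (k + 1)) : Fin k :=
  if hy : y = Fin.last k then j else y.castPred hy

@[simp] lemma phi_castSucc (j c : Fin k) : phi j c.castSucc = c := by
  have h : c.castSucc ≠ Fin.last k := (Fin.castSucc_lt_last c).ne
  simp [phi, h]

@[simp] lemma phi_last (j : Fin k) : phi j (Fin.last k) = j := dif_pos rfl

lemma T1 (f : Fin (k + 1) → Fin (k + 1)) (j : Fin k) (hj : f (Fin.last k) = j.castSucc)
    (n : ℕ) (c : Fin k) :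
    ∃ n', n ≤ n' ∧
      f^[n'] c.castSucc = ((fun i => phi j (f i.castSucc))^[n] c).castSucc := by
  set g := fun i : Fin k => phi j (f i.castSucc) with hg
  induction n with
  | zero => exact ⟨0, le_rfl, rfl⟩
  | succ n ih =>
    obtain ⟨n', hn', he⟩ := ih
    set x := g^[n] c with hx
    by_cases hfx : f x.castSucc = Fin.last k
    · refine ⟨n' + 2, by omega, ?_⟩
      have h1 : g x = j := by rw [hg]; simp [hfx]
      have h2 : g^[n + 1] c = j := by rw [iterate_succ_apply', ← hx, h1]
      rw [h2, show n' + 2 = (n' + 1) + 1 from rfl, iterate_succ_apply',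
        iterate_succ_apply', he, hfx, hj]
    · refine ⟨n' + 1, by omega, ?_⟩
      have h1 : g x = (f x.castSucc).castPred hfx := by rw [hg]; simp [phi, hfx]
      have h2 : g^[n + 1] c = (f x.castSucc).castPred hfx := by
        rw [iterate_succ_apply', ← hx, h1]
      rw [h2, iterate_succ_apply', he, Fin.castSucc_castPred]

lemma T2 (f : Fin (k + 1) → Fin (k + 1)) (j : Fin k) (hj : f (Fin.last k) = j.castSucc) :
    ∀ n, 1 ≤ n → ∀ c y : Fin k, f^[n] c.castSucc = y.castSucc →
      ∃ t, 1 ≤ t ∧ t ≤ n ∧ (fun i => phi j (f i.castSucc))^[t] c = y := by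
  set g := fun i : Fin k => phi j (f i.castSucc) with hg
  intro n
  induction n using Nat.strong_induction_on with
  | _ n ih =>
    intro hn c y hy
    match n, hn with
    | (n + 1), _ =>
      rw [iterate_succ_apply] at hy
      by_cases hfc : f c.castSucc = Fin.last k
      · have hgc : g c = j := by rw [hg]; simp [hfc]
        rw [hfc] at hy
        match n with
        | 0 =>
          exact absurd hy.symm ((Fin.castSucc_lt_last y).ne)
        | (n2 + 1) =>
          rw [iterate_succ_apply, hj] at hy
          match n2 with
          | 0 =>
            refine ⟨1, le_rfl, by omega, ?_⟩
            simpa [hgc] using (Fin.castSucc_injective _ hy)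
          | (n3 + 1) =>
            obtain ⟨t, ht1, ht2, ht3⟩ := ih (n3 + 1) (by omega) (by omega) j y hy
            exact ⟨t + 1, by omega, by omega, by
              rw [iterate_succ_apply, show g c = j from hgc, ht3]⟩
      · set c1 := (f c.castSucc).castPred hfc with hc1
        have hgc : g c = c1 := by rw [hg]; simp [phi, hfc, hc1]
        have hstep : f c.castSucc = c1.castSucc := (Fin.castSucc_castPred _ _).symm
        rw [hstep] at hy
        match n with
        | 0 =>
          refine ⟨1, le_rfl, le_rfl, ?_⟩
          simpa [hgc] using (Fin.castSucc_injective _ hy)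
        | (n2 + 1) =>
          obtain ⟨t, ht1, ht2, ht3⟩ := ih (n2 + 1) (by omega) (by omega) c1 y hy
          exact ⟨t + 1, by omega, by omega, by
            rw [iterate_succ_apply, show g c = c1 from hgc, ht3]⟩

lemma P1 (f : Fin (k + 1) → Fin (k + 1)) (j : Fin k) (hj : f (Fin.last k) = j.castSucc)
    (c : Fin k) :
    c.castSucc ∈ periodicPts f ↔ c ∈ periodicPts (fun i => phi j (f i.castSucc)) := by
  constructor
  · rintro ⟨N, hN, hNp⟩
    obtain ⟨t, ht1, ht2, ht3⟩ := T2 f j hj N hN c c hNp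
    exact ⟨t, ht1, ht3⟩
  · rintro ⟨N, hN, hNp⟩
    obtain ⟨n', hn', he⟩ := T1 f j hj N c
    rw [show (fun i => phi j (f i.castSucc))^[N] c = c from hNp] at he
    exact ⟨n', by omega, he⟩

lemma iterate_mem_periodicPts {α : Type*} (f : α → α) {x : α} (hx : x ∈ periodicPts f)
    (n : ℕ) : f^[n] x ∈ periodicPts f := by
  obtain ⟨N, hN, hNp⟩ := hx
  exact ⟨N, hN, hNp.apply_iterate n⟩

lemma mem_orbit_symm {α : Type*} (f : α → α) {x y : α} (hx : x ∈ periodicPts f)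
    (hy : y ∈ Set.range fun n => f^[n] x) : x ∈ Set.range fun n => f^[n] y := by
  obtain ⟨a, rfl⟩ := hy
  obtain ⟨N, hN, hNp⟩ := hx
  refine ⟨(a + 1) * N - a, ?_⟩
  have h1 : (a + 1) * N - a + a = (a + 1) * N := by
    have : a + 1 ≤ (a + 1) * N := Nat.le_mul_of_pos_right _ hN
    omega
  calc f^[(a + 1) * N - a] (f^[a] x) = f^[(a + 1) * N - a + a] x := by
        rw [← Function.iterate_add_apply]
    _ = x := by rw [h1]; exact hNp.const_mul (a + 1)

lemma orbit_eq {α : Type*} (f : α → α) {x y : α} (hx : x ∈ periodicPts f)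
    (hy : y ∈ Set.range fun n => f^[n] x) :
    (Set.range fun n => f^[n] x) = Set.range fun n => f^[n] y := by
  obtain ⟨b, hb⟩ := mem_orbit_symm f hx hy
  obtain ⟨a, ha⟩ := hy
  simp only at ha hb
  ext z
  simp only [Set.mem_range]
  constructor
  · rintro ⟨n, rfl⟩
    exact ⟨n + b, by rw [Function.iterate_add_apply, hb]⟩
  · rintro ⟨n, rfl⟩
    exact ⟨n + a, by rw [Function.iterate_add_apply, ha]⟩

end OPOAux

namespace OPOAux

open Function

variable {k : ℕ}

lemma opo_iff (f : Fin (k + 1) → Fin (k + 1)) (j : Fin k)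
    (hj : f (Fin.last k) = j.castSucc) :
    OnePeriodicOrbit f ↔ OnePeriodicOrbit (fun i => phi j (f i.castSucc)) := by
  set g := fun i : Fin k => phi j (f i.castSucc) with hg
  constructor
  · rintro ⟨X, hX⟩
    have hXp : X ∈ periodicPts f := hX ▸ ⟨0, rfl⟩
    obtain ⟨x, hx1, hx2⟩ : ∃ x : Fin k, x.castSucc ∈ periodicPts f ∧
        x.castSucc ∈ Set.range fun n => f^[n] X := by
      by_cases hXl : X = Fin.last k
      · refine ⟨j, ?_, ⟨1, ?_⟩⟩
        · rw [← hj, ← hXl]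
          exact iterate_mem_periodicPts f hXp 1
        · simp [hXl, hj]
      · exact ⟨X.castPred hXl, by rwa [Fin.castSucc_castPred],
          ⟨0, by simp [Fin.castSucc_castPred]⟩⟩
    have hpf : periodicPts f = Set.range fun n => f^[n] x.castSucc :=
      hX.trans (orbit_eq f hXp hx2)
    refine ⟨x, ?_⟩
    ext c
    simp only [Set.mem_range]
    constructor
    · intro hc
      have hcf : c.castSucc ∈ periodicPts f := (P1 f j hj c).mpr hc
      rw [hpf] at hcf
      obtain ⟨n, hn⟩ := hcf
      simp only at hn
      match n with
      | 0 => exact ⟨0, Fin.castSucc_injective _ hn⟩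
      | (n + 1) =>
        obtain ⟨t, _, _, ht⟩ := T2 f j hj (n + 1) (by omega) x c hn
        exact ⟨t, ht⟩
    · rintro ⟨n, rfl⟩
      exact iterate_mem_periodicPts g ((P1 f j hj x).mp hx1) n
  · rintro ⟨x, hx⟩
    have hxpg : x ∈ periodicPts g := hx ▸ ⟨0, rfl⟩
    have hxpf : x.castSucc ∈ periodicPts f := (P1 f j hj x).mpr hxpg
    refine ⟨x.castSucc, ?_⟩
    ext p
    simp only [Set.mem_range]
    constructor
    · intro hp
      by_cases hpl : p = Fin.last k
      · subst hpl
        have hfp : j.castSucc ∈ periodicPts f := by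
          rw [← hj]; exact iterate_mem_periodicPts f hp 1
        have hjg : j ∈ periodicPts g := (P1 f j hj j).mp hfp
        rw [hx] at hjg
        obtain ⟨n, hn⟩ := hjg
        simp only at hn
        obtain ⟨n', _, he⟩ := T1 f j hj n x
        rw [hn] at he
        obtain ⟨N, hN, hNp⟩ := hp
        refine ⟨(N - 1) + n', ?_⟩
        have h1 : f^[(N - 1) + n'] x.castSucc = f^[N - 1] j.castSucc := by
          rw [Function.iterate_add_apply, he]
        rw [h1, ← hj, ← Function.iterate_succ_apply]
        have hsN : (N - 1).succ = N := by omega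
        rw [hsN]
        exact hNp
      · set c := p.castPred hpl with hc
        have hcg : c ∈ periodicPts g := (P1 f j hj c).mp (by
          rwa [hc, Fin.castSucc_castPred])
        rw [hx] at hcg
        obtain ⟨n, hn⟩ := hcg
        simp only at hn
        obtain ⟨n', _, he⟩ := T1 f j hj n x
        rw [hn] at he
        exact ⟨n', by rw [he, hc, Fin.castSucc_castPred]⟩
    · rintro ⟨n, rfl⟩
      exact iterate_mem_periodicPts f hxpf n

lemma p0_iff (f : Fin (k + 2) → Fin (k + 2)) (j : Fin (k + 1))
    (hj : f (Fin.last (k + 1)) = j.castSucc) (h0 : f 0 = 0) :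
    periodicPts f = {0} ↔
      periodicPts (fun i => phi j (f i.castSucc)) = {0} := by
  have h0p : (0 : Fin (k + 2)) ∈ periodicPts f :=
    ⟨1, one_pos, show f^[1] 0 = 0 by simpa using h0⟩
  constructor
  · intro hpf
    ext c
    simp only [Set.mem_singleton_iff]
    rw [← P1 f j hj c, hpf]
    simp only [Set.mem_singleton_iff]
    constructor
    · intro h
      have h2 : c.castSucc = (0 : Fin (k + 1)).castSucc := by rw [h, Fin.castSucc_zero]
      exact Fin.castSucc_injective _ h2
    · rintro rfl
      exact Fin.castSucc_zero
  · intro hpg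
    ext p
    simp only [Set.mem_singleton_iff]
    constructor
    · intro hp
      by_cases hpl : p = Fin.last (k + 1)
      · exfalso
        subst hpl
        have hfp : j.castSucc ∈ periodicPts f := by
          rw [← hj]; exact iterate_mem_periodicPts f hp 1
        have hj0 : j = 0 := by
          have := (P1 f j hj j).mp hfp
          rw [hpg] at this
          exact this
        obtain ⟨N, hN, hNp⟩ := hp
        have : f^[N] (Fin.last (k + 1)) = 0 := by
          rw [show N = (N - 1) + 1 by omega, Function.iterate_succ_apply, hj, hj0,
            Fin.castSucc_zero]
          exact Function.iterate_fixed h0 _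
        have hl0 : Fin.last (k + 1) = (0 : Fin (k + 2)) := by
          rw [← hNp]; exact this
        exact absurd hl0 (Fin.last_pos).ne'
      · have hc := (P1 f j hj (p.castPred hpl)).mp (by rwa [Fin.castSucc_castPred])
        rw [hpg] at hc
        simp only [Set.mem_singleton_iff] at hc
        rw [← Fin.castSucc_castPred p hpl, hc, Fin.castSucc_zero]
    · rintro rfl
      exact h0p

lemma opo_last_fixed_iff (f : Fin (k + 1) → Fin (k + 1))
    (hf : f (Fin.last k) = Fin.last k) :
    OnePeriodicOrbit f ↔ periodicPts f = {Fin.last k} := by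
  constructor
  · rintro ⟨x, hx⟩
    have hxp : x ∈ periodicPts f := hx ▸ ⟨0, rfl⟩
    have hlp : Fin.last k ∈ periodicPts f :=
      ⟨1, one_pos, show f^[1] _ = _ by simpa using hf⟩
    rw [hx] at hlp
    obtain ⟨a, ha⟩ := hlp
    simp only at ha
    rw [hx]
    ext z
    simp only [Set.mem_range, Set.mem_singleton_iff]
    constructor
    · rintro ⟨b, rfl⟩
      obtain ⟨N, hN, hNp⟩ := hxp
      have h1 : f^[b + a * N] x = f^[b] x := by
        rw [Function.iterate_add_apply]
        congr 1
        exact hNp.const_mul a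
      have h2 : f^[b + a * N] x = Fin.last k := by
        have hge : a ≤ b + a * N := by
          have : a ≤ a * N := Nat.le_mul_of_pos_right _ hN
          omega
        rw [show b + a * N = (b + a * N - a) + a by omega, Function.iterate_add_apply, ha]
        exact Function.iterate_fixed hf _
      rw [← h1, h2]
    · rintro rfl
      exact ⟨a, ha⟩
  · intro hp
    refine ⟨Fin.last k, ?_⟩
    rw [hp]
    ext z
    simp only [Set.mem_range, Set.mem_singleton_iff]
    constructor
    · rintro rfl
      exact ⟨0, rfl⟩
    · rintro ⟨n, rfl⟩
      exact Function.iterate_fixed hf n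

lemma iterate_conj {α : Type*} (ρ f : α → α) (hρ : ∀ x, ρ (ρ x) = x) (n : ℕ) (x : α) :
    (fun y => ρ (f (ρ y)))^[n] x = ρ (f^[n] (ρ x)) := by
  induction n with
  | zero => simp [hρ]
  | succ n ih =>
    rw [Function.iterate_succ_apply', ih, Function.iterate_succ_apply']
    simp [hρ]

lemma periodicPts_conj {α : Type*} (ρ f : α → α) (hρ : ∀ x, ρ (ρ x) = x) (x : α) :
    x ∈ periodicPts (fun y => ρ (f (ρ y))) ↔ ρ x ∈ periodicPts f := by
  constructor
  · rintro ⟨N, hN, hNp⟩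
    refine ⟨N, hN, ?_⟩
    have h1 : ρ (f^[N] (ρ x)) = x := by rw [← iterate_conj ρ f hρ]; exact hNp
    have hinj : Function.Injective ρ := Function.LeftInverse.injective hρ
    apply hinj
    rw [h1, hρ]
  · rintro ⟨N, hN, hNp⟩
    refine ⟨N, hN, ?_⟩
    show (fun y => ρ (f (ρ y)))^[N] x = x
    rw [iterate_conj ρ f hρ, show f^[N] (ρ x) = ρ x from hNp, hρ]

end OPOAux

namespace OPOAux

open Function

variable {k : ℕ}

lemma fiber_sum {ι α β : Type*} [Fintype ι] [Fintype α] [Fintype β]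
    [DecidableEq α] [DecidableEq ι] (φ : β → α) (M : β → ℚ) (F : (ι → α) → ℚ) :
    ∑ h : ι → β, F (φ ∘ h) * ∏ i, M (h i)
      = ∑ w : ι → α, F w * ∏ i, ∑ y : β, if φ y = w i then M y else 0 := by
  have key : ∀ w : ι → α, (∏ i, ∑ y : β, if φ y = w i then M y else 0)
      = ∑ h : ι → β, if φ ∘ h = w then ∏ i, M (h i) else 0 := by
    intro w
    rw [Fintype.prod_sum]
    refine Finset.sum_congr rfl fun h _ => ?_
    by_cases hw : φ ∘ h = w
    · rw [if_pos hw]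
      refine Finset.prod_congr rfl fun i _ => ?_
      rw [if_pos (show φ (h i) = w i from congrFun hw i)]
    · rw [if_neg hw]
      obtain ⟨i, hi⟩ : ∃ i, φ (h i) ≠ w i := by
        by_contra hc
        push_neg at hc
        exact hw (funext hc)
      exact Finset.prod_eq_zero (Finset.mem_univ i) (if_neg hi)
  simp_rw [key, Finset.mul_sum]
  rw [Finset.sum_comm]
  refine Finset.sum_congr rfl fun h _ => ?_
  rw [Finset.sum_eq_single (φ ∘ h)]
  · rw [if_pos rfl]
  · intro b _ hb
    rw [if_neg (fun hh => hb hh.symm), mul_zero]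
  · intro hmem
    exact absurd (Finset.mem_univ _) hmem

def P0 {k : ℕ} (f : Fin (k + 1) → Fin (k + 1)) : Prop :=
  Function.periodicPts f = {0}

def Tree (k : ℕ) (M : Fin (k + 1) → ℚ) : ℚ :=
  ∑ h : Fin k → Fin (k + 1), if P0 (Fin.cases 0 h) then ∏ i, M (h i) else 0

lemma phi_fiber_sum (j x : Fin (k + 1)) (M : Fin (k + 2) → ℚ) :
    (∑ y : Fin (k + 2), if phi j y = x then M y else 0)
      = M x.castSucc + if x = j then M (Fin.last (k + 1)) else 0 := by
  rw [Fin.sum_univ_castSucc]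
  congr 1
  · simp only [phi_castSucc]
    rw [Finset.sum_eq_single x]
    · rw [if_pos rfl]
    · intro b _ hb
      rw [if_neg hb]
    · intro hmem
      exact absurd (Finset.mem_univ _) hmem
  · rw [phi_last]
    by_cases h : x = j
    · rw [if_pos h.symm, if_pos h]
    · rw [if_neg (fun hh => h hh.symm), if_neg h]

lemma tree_zero (M : Fin 1 → ℚ) : Tree 0 M = 1 := by
  have hP : ∀ h : Fin 0 → Fin 1, P0 (Fin.cases 0 h : Fin 1 → Fin 1) := by
    intro h
    unfold P0
    ext x
    have hx : x = 0 := Fin.ext (by omega)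
    subst hx
    simp only [Set.mem_singleton_iff]
    constructor
    · intro _; trivial
    · intro _
      refine ⟨1, one_pos, ?_⟩
      show (Fin.cases 0 h : Fin 1 → Fin 1)^[1] 0 = 0
      simp
  rw [Tree]
  rw [Finset.sum_congr rfl (fun h _ => if_pos (hP h))]
  simp

lemma cases_eq_contract (h' : Fin k → Fin (k + 2)) (j : Fin (k + 1)) :
    (fun x : Fin (k + 1) =>
        phi j ((Fin.cases 0 (Fin.snoc h' j.castSucc) : Fin (k + 2) → Fin (k + 2)) x.castSucc))
      = (Fin.cases 0 (fun i => phi j (h' i)) : Fin (k + 1) → Fin (k + 1)) := by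
  funext x
  induction x using Fin.cases with
  | zero =>
    have h0 : (0 : Fin (k + 2)) ≠ Fin.last (k + 1) := (Fin.last_pos).ne
    simp [phi, h0, Fin.castPred_zero]
  | succ i =>
    simp only [← Fin.succ_castSucc, Fin.cases_succ, Fin.snoc_castSucc]

lemma tree_succ (M : Fin (k + 2) → ℚ) :
    Tree (k + 1) M = ∑ j : Fin (k + 1), M j.castSucc *
      Tree k (fun x => M x.castSucc + if x = j then M (Fin.last (k + 1)) else 0) := by
  rw [Tree]
  rw [← Equiv.sum_comp (Fin.snocEquiv (fun _ => Fin (k + 2)))]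
  rw [Fintype.sum_prod_type]
  have hsnoc : ∀ (y : Fin (k + 2)) (h' : Fin k → Fin (k + 2)),
      (Fin.snocEquiv (fun _ => Fin (k + 2)) (y, h')) = Fin.snoc h' y := by
    intro y h'
    rfl
  rw [Fin.sum_univ_castSucc]
  have hlast : (∑ h' : Fin k → Fin (k + 2),
      if P0 (Fin.cases 0 (Fin.snocEquiv (fun _ => Fin (k + 2)) (Fin.last (k + 1), h')))
      then ∏ i, M ((Fin.snocEquiv (fun _ => Fin (k + 2)) (Fin.last (k + 1), h')) i)
      else 0) = 0 := by
    refine Finset.sum_eq_zero fun h' _ => ?_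
    rw [hsnoc]
    rw [if_neg]
    intro hP
    have hfl : (Fin.cases 0 (Fin.snoc h' (Fin.last (k + 1))) : Fin (k + 2) → Fin (k + 2))
        (Fin.last (k + 1)) = Fin.last (k + 1) := by
      simp only [← Fin.succ_last, Fin.cases_succ, Fin.snoc_last]
    have hmem : Fin.last (k + 1) ∈ Function.periodicPts
        (Fin.cases 0 (Fin.snoc h' (Fin.last (k + 1))) : Fin (k + 2) → Fin (k + 2)) :=
      ⟨1, one_pos, show _ = _ by simpa using hfl⟩
    rw [hP] at hmem
    exact absurd hmem (Fin.last_pos).ne'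
  rw [hlast, add_zero]
  refine Finset.sum_congr rfl fun j _ => ?_
  have hstep : ∀ h' : Fin k → Fin (k + 2),
      (if P0 (Fin.cases 0 (Fin.snocEquiv (fun _ => Fin (k + 2)) (j.castSucc, h')))
        then ∏ i, M ((Fin.snocEquiv (fun _ => Fin (k + 2)) (j.castSucc, h')) i) else 0)
      = ((if P0 (Fin.cases 0 (fun i => phi j (h' i)) : Fin (k + 1) → Fin (k + 1))
          then 1 else 0) * ∏ i, M (h' i)) * M j.castSucc := by
    intro h'
    rw [hsnoc]
    have hprod : (∏ i : Fin (k + 1), M ((Fin.snoc h' j.castSucc : Fin (k + 1) → Fin (k + 2)) i))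
        = (∏ i : Fin k, M (h' i)) * M j.castSucc := by
      rw [Fin.prod_univ_castSucc]
      simp only [Fin.snoc_castSucc, Fin.snoc_last]
    have hf : (Fin.cases 0 (Fin.snoc h' j.castSucc) : Fin (k + 2) → Fin (k + 2))
        (Fin.last (k + 1)) = j.castSucc := by
      simp only [← Fin.succ_last, Fin.cases_succ, Fin.snoc_last]
    have h0 : (Fin.cases 0 (Fin.snoc h' j.castSucc) : Fin (k + 2) → Fin (k + 2)) 0 = 0 :=
      by simp
    have hiff := p0_iff (Fin.cases 0 (Fin.snoc h' j.castSucc)) j hf h0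
    rw [cases_eq_contract h' j] at hiff
    unfold P0
    by_cases hP : Function.periodicPts
        (Fin.cases 0 (Fin.snoc h' j.castSucc) : Fin (k + 2) → Fin (k + 2)) = {0}
    · rw [if_pos hP, if_pos (hiff.mp hP), hprod, one_mul]
    · rw [if_neg hP, if_neg (fun hg => hP (hiff.mpr hg)), zero_mul, zero_mul]
  simp_rw [hstep]
  rw [← Finset.sum_mul]
  have hfib := fiber_sum (phi j) M
    (fun w : Fin k → Fin (k + 1) =>
      if P0 (Fin.cases 0 w : Fin (k + 1) → Fin (k + 1)) then 1 else 0)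
  rw [show (∑ h' : Fin k → Fin (k + 2),
      (if P0 (Fin.cases 0 (fun i => phi j (h' i)) : Fin (k + 1) → Fin (k + 1))
        then (1 : ℚ) else 0) * ∏ i, M (h' i))
    = ∑ w : Fin k → Fin (k + 1),
      (if P0 (Fin.cases 0 w : Fin (k + 1) → Fin (k + 1)) then (1 : ℚ) else 0) *
        ∏ i, ∑ y : Fin (k + 2), if phi j y = w i then M y else 0 from hfib]
  simp_rw [phi_fiber_sum]
  rw [Tree, mul_comm]
  congr 1
  refine Finset.sum_congr rfl fun w _ => ?_
  rw [ite_mul, one_mul, zero_mul]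

end OPOAux

namespace OPOAux

lemma tree_eq : ∀ (k : ℕ) (M : Fin (k + 2) → ℚ), Tree (k + 1) M = M 0 * (∑ i, M i) ^ k := by
  intro k
  induction k with
  | zero =>
    intro M
    rw [tree_succ, pow_zero, Fin.sum_univ_one, tree_zero]
    simp
  | succ k ih =>
    intro M
    rw [tree_succ]
    have hS : ∀ j : Fin (k + 2),
        (∑ x : Fin (k + 2), (M x.castSucc + if x = j then M (Fin.last (k + 2)) else 0))
          = ∑ i, M i := by
      intro j
      rw [Finset.sum_add_distrib, Finset.sum_ite_eq' Finset.univ j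
        (fun _ => M (Fin.last (k + 2))), if_pos (Finset.mem_univ _),
        ← Fin.sum_univ_castSucc]
    have step : ∀ j : Fin (k + 2),
        Tree (k + 1) (fun x => M x.castSucc + if x = j then M (Fin.last (k + 2)) else 0)
          = (M 0 + if (0 : Fin (k + 2)) = j then M (Fin.last (k + 2)) else 0)
              * (∑ i, M i) ^ k := by
      intro j
      rw [ih]
      rw [hS j]
      rw [Fin.castSucc_zero]
    simp_rw [step]
    simp_rw [← mul_assoc]
    rw [← Finset.sum_mul]
    have hsum : (∑ j : Fin (k + 2), M j.castSucc *
        (M 0 + if (0 : Fin (k + 2)) = j then M (Fin.last (k + 2)) else 0))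
        = (∑ j : Fin (k + 2), M j.castSucc) * M 0 + M 0 * M (Fin.last (k + 2)) := by
      simp_rw [mul_add, mul_ite, mul_zero]
      rw [Finset.sum_add_distrib, ← Finset.sum_mul,
        Finset.sum_ite_eq Finset.univ (0 : Fin (k + 2))
          (fun j => M j.castSucc * M (Fin.last (k + 2))),
        if_pos (Finset.mem_univ _), Fin.castSucc_zero]
    rw [hsum]
    rw [show (∑ i, M i) = (∑ j : Fin (k + 2), M j.castSucc) + M (Fin.last (k + 2)) from
      Fin.sum_univ_castSucc M]
    ring

end OPOAux

open OPOAux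

/-- The recurrence
`G(m₁,…,m_k) = m_k² (m₁+⋯+m_k)^{k−2} + Σ_{j=1}^{k−1} m_j G(m₁,…,m_j+m_k,…,m_{k−1})`
for `k ≥ 2` (here `k = n + 2`). -/
theorem stmt13 (n : ℕ) (m : Fin (n + 2) → ℕ) (hm : ∀ i, 0 < m i) :
    G m = (m (Fin.last (n + 1)) : ℚ) ^ 2 * (∑ i, (m i : ℚ)) ^ n +
      ∑ j : Fin (n + 1), (m j.castSucc : ℚ) *
        G (fun i : Fin (n + 1) =>
          if i = j then m j.castSucc + m (Fin.last (n + 1)) else m i.castSucc) := by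
  rw [show G m = ∑ f : Fin (n + 2) → Fin (n + 2),
    if OnePeriodicOrbit f then ∏ i, (m (f i) : ℚ) else 0 from rfl]
  rw [← Equiv.sum_comp (Fin.snocEquiv (fun _ : Fin (n + 2) => Fin (n + 2)))]
  rw [Fintype.sum_prod_type]
  have hsnoc : ∀ (y : Fin (n + 2)) (h : Fin (n + 1) → Fin (n + 2)),
      (Fin.snocEquiv (fun _ : Fin (n + 2) => Fin (n + 2)) (y, h)) = Fin.snoc h y :=
    fun _ _ => rfl
  simp only [hsnoc]
  rw [Fin.sum_univ_castSucc]
  -- Case B : the terms with f (last) = j.castSucc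
  have hB : ∀ j : Fin (n + 1),
      (∑ h : Fin (n + 1) → Fin (n + 2),
        if OnePeriodicOrbit (Fin.snoc h j.castSucc : Fin (n + 2) → Fin (n + 2))
        then ∏ i : Fin (n + 2),
          (m ((Fin.snoc h j.castSucc : Fin (n + 2) → Fin (n + 2)) i) : ℚ) else 0)
      = (m j.castSucc : ℚ) * G (fun i : Fin (n + 1) =>
          if i = j then m j.castSucc + m (Fin.last (n + 1)) else m i.castSucc) := by
    intro j
    have h1 : ∀ h : Fin (n + 1) → Fin (n + 2),
        (if OnePeriodicOrbit (Fin.snoc h j.castSucc : Fin (n + 2) → Fin (n + 2))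
          then ∏ i : Fin (n + 2),
            (m ((Fin.snoc h j.castSucc : Fin (n + 2) → Fin (n + 2)) i) : ℚ) else 0)
        = ((if OnePeriodicOrbit (phi j ∘ h) then (1 : ℚ) else 0) *
            ∏ i : Fin (n + 1), (m (h i) : ℚ)) * (m j.castSucc : ℚ) := by
      intro h
      have hf : (Fin.snoc h j.castSucc : Fin (n + 2) → Fin (n + 2)) (Fin.last (n + 1))
          = j.castSucc := Fin.snoc_last _ _
      have hiff := opo_iff (Fin.snoc h j.castSucc) j hf
      have hcontr : (fun i : Fin (n + 1) =>
          phi j ((Fin.snoc h j.castSucc : Fin (n + 2) → Fin (n + 2)) i.castSucc))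
          = phi j ∘ h := by
        funext i
        simp only [Fin.snoc_castSucc, Function.comp_apply]
      rw [hcontr] at hiff
      have hprod : (∏ i : Fin (n + 2),
          (m ((Fin.snoc h j.castSucc : Fin (n + 2) → Fin (n + 2)) i) : ℚ))
          = (∏ i : Fin (n + 1), (m (h i) : ℚ)) * (m j.castSucc : ℚ) := by
        rw [Fin.prod_univ_castSucc]
        simp only [Fin.snoc_castSucc, Fin.snoc_last]
      by_cases hO : OnePeriodicOrbit (phi j ∘ h)
      · rw [if_pos (hiff.mpr hO), if_pos hO, hprod, one_mul]
      · rw [if_neg (fun hh => hO (hiff.mp hh)), if_neg hO, zero_mul, zero_mul]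
    rw [Finset.sum_congr rfl (fun h _ => h1 h), ← Finset.sum_mul]
    rw [show (∑ h : Fin (n + 1) → Fin (n + 2),
        (if OnePeriodicOrbit (phi j ∘ h) then (1 : ℚ) else 0) *
          ∏ i : Fin (n + 1), (m (h i) : ℚ))
      = ∑ w : Fin (n + 1) → Fin (n + 1),
        (if OnePeriodicOrbit w then (1 : ℚ) else 0) *
          ∏ i, ∑ y : Fin (n + 2), if phi j y = w i then (m y : ℚ) else 0 from
      fiber_sum (phi j) (fun y : Fin (n + 2) => (m y : ℚ))
        (fun w : Fin (n + 1) → Fin (n + 1) => if OnePeriodicOrbit w then (1 : ℚ) else 0)]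
    have h2 : ∀ w : Fin (n + 1) → Fin (n + 1),
        ((if OnePeriodicOrbit w then (1 : ℚ) else 0) *
            ∏ i, ∑ y : Fin (n + 2), if phi j y = w i then (m y : ℚ) else 0)
        = (if OnePeriodicOrbit w then
            ∏ i, (((fun i : Fin (n + 1) => if i = j then m j.castSucc + m (Fin.last (n + 1))
              else m i.castSucc) (w i) : ℕ) : ℚ) else 0) := by
      intro w
      have h3 : ∀ i : Fin (n + 1),
          (∑ y : Fin (n + 2), if phi j y = w i then (m y : ℚ) else 0)
          = (((fun i : Fin (n + 1) => if i = j then m j.castSucc + m (Fin.last (n + 1))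
              else m i.castSucc) (w i) : ℕ) : ℚ) := by
        intro i
        rw [phi_fiber_sum]
        simp only
        by_cases hw : w i = j
        · rw [if_pos hw, if_pos hw, hw]
          push_cast
          ring
        · rw [if_neg hw, if_neg hw, add_zero]
      simp_rw [h3]
      rw [ite_mul, one_mul, zero_mul]
    rw [Finset.sum_congr rfl (fun w _ => h2 w), mul_comm]
    rfl
  -- Case A : the term with f (last) = last
  have hA : (∑ h : Fin (n + 1) → Fin (n + 2),
      if OnePeriodicOrbit (Fin.snoc h (Fin.last (n + 1)) : Fin (n + 2) → Fin (n + 2))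
      then ∏ i : Fin (n + 2),
        (m ((Fin.snoc h (Fin.last (n + 1)) : Fin (n + 2) → Fin (n + 2)) i) : ℚ) else 0)
      = (m (Fin.last (n + 1)) : ℚ) ^ 2 * (∑ i, (m i : ℚ)) ^ n := by
    set M : Fin (n + 2) → ℚ := fun y => (m y.rev : ℚ) with hM
    have h1 : ∀ h : Fin (n + 1) → Fin (n + 2),
        (if OnePeriodicOrbit (Fin.snoc h (Fin.last (n + 1)) : Fin (n + 2) → Fin (n + 2))
          then ∏ i : Fin (n + 2),
            (m ((Fin.snoc h (Fin.last (n + 1)) : Fin (n + 2) → Fin (n + 2)) i) : ℚ) else 0)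
        = (if P0 (Fin.cases 0 (fun i : Fin (n + 1) => (h i.rev).rev) :
              Fin (n + 2) → Fin (n + 2))
            then ∏ i : Fin (n + 1), M ((fun i : Fin (n + 1) => (h i.rev).rev) i) else 0) *
          (m (Fin.last (n + 1)) : ℚ) := by
      intro h
      set f : Fin (n + 2) → Fin (n + 2) := Fin.snoc h (Fin.last (n + 1)) with hfdef
      have hfl : f (Fin.last (n + 1)) = Fin.last (n + 1) := Fin.snoc_last _ _
      have hconj : (Fin.cases 0 (fun i : Fin (n + 1) => (h i.rev).rev) :
          Fin (n + 2) → Fin (n + 2)) = fun x => (f x.rev).rev := by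
        funext x
        induction x using Fin.cases with
        | zero =>
          rw [Fin.cases_zero]
          rw [show Fin.rev (0 : Fin (n + 2)) = Fin.last (n + 1) from Fin.rev_zero _]
          rw [hfl, Fin.rev_last]
        | succ i =>
          rw [Fin.cases_succ, Fin.rev_succ, hfdef, Fin.snoc_castSucc]
      have hPiff : P0 (Fin.cases 0 (fun i : Fin (n + 1) => (h i.rev).rev) :
          Fin (n + 2) → Fin (n + 2)) ↔
          Function.periodicPts f = {Fin.last (n + 1)} := by
        rw [hconj]
        unfold P0
        have hmemiff := periodicPts_conj (Fin.rev) f (fun x => Fin.rev_rev x)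
        constructor
        · intro hp
          ext z
          simp only [Set.mem_singleton_iff]
          constructor
          · intro hz
            have : z.rev ∈ Function.periodicPts (fun y => (f y.rev).rev) := by
              rw [hmemiff z.rev, Fin.rev_rev]
              exact hz
            rw [hp] at this
            simp only [Set.mem_singleton_iff] at this
            have := congrArg Fin.rev this
            rwa [Fin.rev_rev, Fin.rev_zero] at this
          · rintro rfl
            exact ⟨1, one_pos, show f^[1] _ = _ by simpa using hfl⟩
        · intro hp
          ext z
          simp only [Set.mem_singleton_iff]
          rw [hmemiff z, hp]
          simp only [Set.mem_singleton_iff]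
          constructor
          · intro hz
            have := congrArg Fin.rev hz
            rwa [Fin.rev_rev, Fin.rev_last] at this
          · rintro rfl
            exact Fin.rev_zero _
      have hOiff := opo_last_fixed_iff f hfl
      have hprod : (∏ i : Fin (n + 2), (m (f i) : ℚ))
          = (∏ i : Fin (n + 1), M ((fun i : Fin (n + 1) => (h i.rev).rev) i)) *
            (m (Fin.last (n + 1)) : ℚ) := by
        rw [Fin.prod_univ_castSucc]
        congr 1
        · have hMe : ∀ i : Fin (n + 1), M ((h i.rev).rev) = (m (h i.rev) : ℚ) := by
            intro i
            rw [hM]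
            simp only [Fin.rev_rev]
          simp_rw [hMe]
          simp only [hfdef, Fin.snoc_castSucc]
          exact (Equiv.prod_comp (Fin.revPerm : Equiv.Perm (Fin (n + 1)))
            (fun i => (m (h i) : ℚ))).symm
        · rw [hfdef, Fin.snoc_last]
      by_cases hO : OnePeriodicOrbit f
      · rw [if_pos hO, if_pos (hPiff.mpr (hOiff.mp hO)), hprod]
      · rw [if_neg hO, if_neg (fun hP => hO (hOiff.mpr (hPiff.mp hP))), zero_mul]
    rw [Finset.sum_congr rfl (fun h _ => h1 h), ← Finset.sum_mul]
    have htr : Function.Involutive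
        (fun (h : Fin (n + 1) → Fin (n + 2)) => fun i : Fin (n + 1) => (h i.rev).rev) := by
      intro h
      funext i
      simp [Fin.rev_rev]
    rw [Fintype.sum_bijective _ htr.bijective _
      (fun w : Fin (n + 1) → Fin (n + 2) =>
        if P0 (Fin.cases 0 w : Fin (n + 2) → Fin (n + 2))
        then ∏ i : Fin (n + 1), M (w i) else 0) (fun h => rfl)]
    rw [show (∑ w : Fin (n + 1) → Fin (n + 2),
        if P0 (Fin.cases 0 w : Fin (n + 2) → Fin (n + 2))
        then ∏ i : Fin (n + 1), M (w i) else 0) = Tree (n + 1) M from rfl]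
    rw [tree_eq n M]
    have hM0 : M 0 = (m (Fin.last (n + 1)) : ℚ) := by
      rw [hM]
      simp only [Fin.rev_zero]
    have hMS : (∑ i, M i) = ∑ i, (m i : ℚ) := by
      rw [hM]
      exact Equiv.sum_comp (Fin.revPerm : Equiv.Perm (Fin (n + 2))) (fun y => (m y : ℚ))
    rw [hM0, hMS]
    ring
  rw [Finset.sum_congr rfl (fun j _ => hB j), hA, add_comm]
end
end

section
/- For every integer k ≥ 2 and all positive integers m₁,…,m_k, the function H(m₁,…,m_l) := Σ_{r=1}^{m₁+⋯+m_l} C_r(m₁,…,m_l) satisfies the recurrence H(m₁,…,m_k) = m_k²·(m₁ + ⋯ + m_k)^{k−2} + Σ_{j=1}^{k−1} m_j · H(m₁,…,m_{j−1}, m_j + m_k, m_{j+1},…,m_{k−1}), where in the j-th summand the sequence has k−1 entries, obtained from (m₁,…,m_{k−1}) by replacing m_j with m_j + m_k. -/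
open scoped BigOperators Classical

noncomputable section

/-- The coefficient `C_r(m₁,…,m_l) = Σ_{I : Σ_{i∈I} m_i < r} r^{|I|−1} (d−r)^{l−|I|−1}
(r − Σ_{i∈I} m_i)` where `d = m₁ + ⋯ + m_l`; the possibly negative exponents are
interpreted via `zpow` in `ℚ` (so the `I = ∅` term equals `(d−r)^{l−1}` and `0^0 = 1`). -/
def Ccoef {l : ℕ} (m : Fin l → ℕ) (r : ℕ) : ℚ :=
  ∑ I ∈ Finset.univ.powerset.filter (fun I : Finset (Fin l) => (∑ i ∈ I, m i) < r),
    (r : ℚ) ^ ((I.card : ℤ) - 1) *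
      ((∑ i, (m i : ℚ)) - r) ^ ((l : ℤ) - I.card - 1) *
      ((r : ℚ) - ∑ i ∈ I, (m i : ℚ))

/-- `H(m₁,…,m_l) = Σ_{r=1}^{m₁+⋯+m_l} C_r(m₁,…,m_l)`. -/
def H {l : ℕ} (m : Fin l → ℕ) : ℚ :=
  ∑ r ∈ Finset.Icc 1 (∑ i, m i), Ccoef m r

open Finset

namespace Stmt14Aux


variable {ι : Type*} [DecidableEq ι]

/-- `g`-sum: `Σ_{J⊆S} (a+s_J)^{|J|} (b+s_{S\J})^{|S|-|J|}`. -/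
def gsum (m : ι → ℚ) (S : Finset ι) (a b : ℚ) : ℚ :=
  ∑ J ∈ S.powerset, (a + ∑ i ∈ J, m i) ^ J.card * (b + ∑ i ∈ S \ J, m i) ^ (S.card - J.card)

/-- Hurwitz-I sum. -/
def hsum (m : ι → ℚ) (S : Finset ι) (x y : ℚ) : ℚ :=
  ∑ J ∈ S.powerset,
    x * (x + ∑ i ∈ J, m i) ^ ((J.card : ℤ) - 1) * (y + ∑ i ∈ S \ J, m i) ^ (S.card - J.card)

lemma sum_powerset_mem (S : Finset ι) {i : ι} (hi : i ∈ S) (f : Finset ι → ℚ) :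
    ∑ J ∈ S.powerset, (if i ∈ J then f J else 0)
      = ∑ J ∈ (S.erase i).powerset, f (insert i J) := by
  have hS : S = insert i (S.erase i) := (Finset.insert_erase hi).symm
  nth_rewrite 1 [hS]
  rw [Finset.sum_powerset_insert (Finset.notMem_erase i S)]
  have h1 : ∑ J ∈ (S.erase i).powerset, (if i ∈ J then f J else 0) = 0 := by
    apply Finset.sum_eq_zero
    intro J hJ
    have : i ∉ J := fun h => (Finset.notMem_erase i S) (Finset.mem_powerset.1 hJ h)
    simp [this]
  rw [h1, zero_add]
  apply Finset.sum_congr rfl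
  intro J _
  simp

lemma sdiff_insert_comm {S J : Finset ι} {t : ι} (htS : t ∉ S) (hJ : J ⊆ S) :
    insert t S \ insert t J = S \ J := by
  ext i
  simp only [Finset.mem_sdiff, Finset.mem_insert, not_or]
  constructor
  · rintro ⟨h1 | h1, h2, h3⟩
    · exact absurd h1 h2
    · exact ⟨h1, h3⟩
  · rintro ⟨h1, h2⟩
    exact ⟨Or.inr h1, fun h => htS (h ▸ h1), h2⟩

lemma sdiff_insert_erase {S J : Finset ι} {i : ι} (hi : i ∈ S) (hJ : J ⊆ S.erase i) :
    S \ insert i J = (S.erase i) \ J := by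
  ext x
  simp only [Finset.mem_sdiff, Finset.mem_insert, Finset.mem_erase, not_or]
  tauto

theorem hurwitz_main (m : ι → ℚ) :
    ∀ S : Finset ι, (∀ i ∈ S, 0 ≤ m i) →
      (∀ x y : ℚ, 0 < x → 0 ≤ y →
        hsum m S x y = (x + y + ∑ i ∈ S, m i) ^ S.card)
      ∧ (∀ a b c e : ℚ, 0 < a → 0 ≤ b → 0 < c → 0 ≤ e → a + b = c + e →
        gsum m S a b = gsum m S c e) := by
  intro S
  induction S using Finset.strongInduction with
  | _ S ih =>
    intro hm
    rcases S.eq_empty_or_nonempty with rfl | ⟨t, ht⟩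
    · constructor
      · intro x y hx hy
        simp [hsum, mul_inv_cancel₀ hx.ne']
      · intro a b c e _ _ _ _ _
        simp [gsum]
    · set T := S.erase t with hT
      have htT : t ∉ T := Finset.notMem_erase t S
      have hS : S = insert t T := (Finset.insert_erase ht).symm
      have hTS : T ⊂ S := Finset.erase_ssubset ht
      have hmT : ∀ i ∈ T, 0 ≤ m i := fun i hi => hm i (Finset.erase_subset t S hi)
      obtain ⟨IH1, IH2⟩ := ih T hTS hmT
      have hmt : 0 ≤ m t := hm t ht
      have hsumS : ∑ i ∈ S, m i = m t + ∑ i ∈ T, m i := by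
        rw [hS, Finset.sum_insert htT]
      have hcardS : S.card = T.card + 1 := by
        rw [hS, Finset.card_insert_of_notMem htT]
      -- nonnegativity of partial sums
      have hsJ : ∀ J : Finset ι, J ⊆ T → (0:ℚ) ≤ ∑ i ∈ J, m i := by
        intro J hJ
        exact Finset.sum_nonneg fun i hi => hmT i (hJ hi)
      have keyI : ∀ x y : ℚ, 0 < x → 0 ≤ y →
          hsum m S x y = (x + y + ∑ i ∈ S, m i) ^ S.card := by
        intro x y hx hy
        set D : ℚ := x + y + ∑ i ∈ S, m i with hD
        have e0 : hsum m S x y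
            = (D * hsum m T x (y + m t) - x * gsum m T x (y + m t))
              + x * gsum m T (x + m t) y := by
          rw [hsum]
          nth_rewrite 1 [hS]
          rw [Finset.sum_powerset_insert htT]
          congr 1
          · -- branch 1
            rw [hsum, gsum, Finset.mul_sum, Finset.mul_sum, ← Finset.sum_sub_distrib]
            apply Finset.sum_congr rfl
            intro J hJ
            have hJT : J ⊆ T := Finset.mem_powerset.1 hJ
            have htJ : t ∉ J := fun h => htT (hJT h)
            have htTJ : t ∉ T \ J := fun h => htT (Finset.mem_sdiff.1 h).1
            have h1 : S \ J = insert t (T \ J) := by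
              rw [hS]; exact Finset.insert_sdiff_of_notMem _ htJ
            have h2 : ∑ i ∈ insert t (T \ J), m i = m t + ∑ i ∈ T \ J, m i :=
              Finset.sum_insert htTJ
            have hcc : J.card ≤ T.card := Finset.card_le_card hJT
            have h3 : S.card - J.card = (T.card - J.card) + 1 := by omega
            have hxs : x + ∑ i ∈ J, m i ≠ 0 := by
              have := hsJ J hJT; positivity
            have h4 : (x + ∑ i ∈ J, m i) ^ J.card
                = (x + ∑ i ∈ J, m i) ^ ((J.card : ℤ) - 1) * (x + ∑ i ∈ J, m i) := by
              rw [← zpow_natCast (x + ∑ i ∈ J, m i) J.card,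
                ← zpow_add_one₀ hxs ((J.card : ℤ) - 1)]
              norm_num
            have h5 : ∑ i ∈ T, m i = ∑ i ∈ J, m i + ∑ i ∈ T \ J, m i := by
              rw [add_comm, Finset.sum_sdiff hJT]
            have hDD : D = (x + ∑ i ∈ J, m i) + (y + (m t + ∑ i ∈ T \ J, m i)) := by
              rw [hD, hsumS, h5]; ring
            rw [h1, h2, h3, pow_succ, h4, hDD]
            ring
          · -- branch 2
            rw [gsum, Finset.mul_sum]
            apply Finset.sum_congr rfl
            intro J hJ
            have hJT : J ⊆ T := Finset.mem_powerset.1 hJ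
            have htJ : t ∉ J := fun h => htT (hJT h)
            have h1 : S \ insert t J = T \ J := by
              rw [hS]; exact sdiff_insert_comm htT hJT
            have h2 : ∑ i ∈ insert t J, m i = m t + ∑ i ∈ J, m i :=
              Finset.sum_insert htJ
            have hcc : J.card ≤ T.card := Finset.card_le_card hJT
            have h3 : S.card - (insert t J).card = T.card - J.card := by
              rw [Finset.card_insert_of_notMem htJ]; omega
            have h4 : (((insert t J).card : ℤ) - 1) = (J.card : ℤ) := by
              rw [Finset.card_insert_of_notMem htJ]; push_cast; ring
            rw [h1, h2, h3, h4, zpow_natCast]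
            rw [show x + (m t + ∑ i ∈ J, m i) = x + m t + ∑ i ∈ J, m i by ring]
            ring
        rw [e0, IH1 x (y + m t) hx (by linarith),
          IH2 (x + m t) y x (y + m t) (by linarith) hy hx (by linarith) (by ring)]
        rw [show x + (y + m t) + ∑ i ∈ T, m i = D by rw [hD, hsumS]; ring]
        rw [hcardS, pow_succ]
        ring
      refine ⟨keyI, ?_⟩
      -- recursion for gsum on S
      have hrec : ∀ a b : ℚ, 0 < a → 0 ≤ b →
          gsum m S a b = (a + b + ∑ i ∈ S, m i) ^ S.card
            + ∑ i ∈ S, m i * gsum m (S.erase i) (a + m i) b := by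
        intro a b ha hb
        have hsJS : ∀ J : Finset ι, J ⊆ S → (0:ℚ) ≤ ∑ i ∈ J, m i := by
          intro J hJ
          exact Finset.sum_nonneg fun i hi => hm i (hJ hi)
        have e1 : gsum m S a b = hsum m S a b
            + ∑ J ∈ S.powerset, ∑ i ∈ S, (if i ∈ J then
                m i * ((a + ∑ i' ∈ J, m i') ^ ((J.card : ℤ) - 1)
                  * (b + ∑ i' ∈ S \ J, m i') ^ (S.card - J.card)) else 0) := by
          rw [hsum, ← Finset.sum_add_distrib]
          apply Finset.sum_congr rfl
          intro J hJ
          have hJS : J ⊆ S := Finset.mem_powerset.1 hJ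
          have hin : ∑ i ∈ S, (if i ∈ J then
                m i * ((a + ∑ i' ∈ J, m i') ^ ((J.card : ℤ) - 1)
                  * (b + ∑ i' ∈ S \ J, m i') ^ (S.card - J.card)) else 0)
              = (∑ i ∈ J, m i) * ((a + ∑ i' ∈ J, m i') ^ ((J.card : ℤ) - 1)
                  * (b + ∑ i' ∈ S \ J, m i') ^ (S.card - J.card)) := by
            rw [Finset.sum_ite_mem, Finset.inter_eq_right.2 hJS, Finset.sum_mul]
          rw [hin]
          have hxs : a + ∑ i ∈ J, m i ≠ 0 := by
            have := hsJS J hJS; positivity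
          have h4 : (a + ∑ i ∈ J, m i) ^ J.card
              = (a + ∑ i ∈ J, m i) ^ ((J.card : ℤ) - 1) * (a + ∑ i ∈ J, m i) := by
            rw [← zpow_natCast (a + ∑ i ∈ J, m i) J.card,
              ← zpow_add_one₀ hxs ((J.card : ℤ) - 1)]
            norm_num
          rw [h4]
          ring
        rw [e1, keyI a b ha hb, Finset.sum_comm]
        congr 1
        apply Finset.sum_congr rfl
        intro i hi
        rw [sum_powerset_mem S hi]
        rw [gsum, Finset.mul_sum]
        apply Finset.sum_congr rfl
        intro J hJ
        have hJT : J ⊆ S.erase i := Finset.mem_powerset.1 hJ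
        have hiJ : i ∉ J := fun h => (Finset.notMem_erase i S) (hJT h)
        have h2 : ∑ i' ∈ insert i J, m i' = m i + ∑ i' ∈ J, m i' :=
          Finset.sum_insert hiJ
        have h5 : S \ insert i J = (S.erase i) \ J := sdiff_insert_erase hi hJT
        have h6 : S.card - (insert i J).card = (S.erase i).card - J.card := by
          rw [Finset.card_insert_of_notMem hiJ, Finset.card_erase_of_mem hi]
          have h7 : J.card ≤ (S.erase i).card := Finset.card_le_card hJT
          have h8 : (S.erase i).card = S.card - 1 := Finset.card_erase_of_mem hi
          have h9 : 1 ≤ S.card := Finset.card_pos.2 ⟨i, hi⟩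
          omega
        have h4 : (((insert i J).card : ℤ) - 1) = (J.card : ℤ) := by
          rw [Finset.card_insert_of_notMem hiJ]; push_cast; ring
        rw [h2, h4, h5, h6, zpow_natCast,
          show a + (m i + ∑ i' ∈ J, m i') = a + m i + ∑ i' ∈ J, m i' by ring]
      intro a b c e ha hb hc he habce
      rw [hrec a b ha hb, hrec c e hc he, habce]
      congr 1
      apply Finset.sum_congr rfl
      intro i hi
      have hme : ∀ i' ∈ S.erase i, 0 ≤ m i' := fun i' hi' => hm i' (Finset.erase_subset i S hi')
      have hmi : 0 ≤ m i := hm i hi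
      rw [(ih (S.erase i) (Finset.erase_ssubset hi) hme).2 (a + m i) b (c + m i) e
        (by linarith) hb (by linarith) he (by linarith)]

theorem sum_powerset_sdiff (T : Finset ι) (f : Finset ι → ℚ) :
    ∑ J ∈ T.powerset, f J = ∑ J ∈ T.powerset, f (T \ J) := by
  apply Finset.sum_nbij' (fun J => T \ J) (fun J => T \ J) <;>
    simp +contextual [Finset.sdiff_sdiff_eq_self, Finset.mem_powerset]

theorem hurwitz2 (m : ι → ℚ) (S : Finset ι) (hne : S.Nonempty) (hm : ∀ i ∈ S, 0 ≤ m i)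
    (x y : ℚ) (hx : 0 < x) (hy : 0 < y) :
    ∑ J ∈ S.powerset,
      x * (x + ∑ i ∈ J, m i) ^ ((J.card : ℤ) - 1)
        * (y * (y + ∑ i ∈ S \ J, m i) ^ ((S.card : ℤ) - J.card - 1))
      = (x + y) * (x + y + ∑ i ∈ S, m i) ^ (S.card - 1) := by
  obtain ⟨t, ht⟩ := hne
  set T := S.erase t with hT
  have htT : t ∉ T := Finset.notMem_erase t S
  have hS : S = insert t T := (Finset.insert_erase ht).symm
  have hmT : ∀ i ∈ T, 0 ≤ m i := fun i hi => hm i (Finset.erase_subset t S hi)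
  have hmt : 0 ≤ m t := hm t ht
  have hsumS : ∑ i ∈ S, m i = m t + ∑ i ∈ T, m i := by
    rw [hS, Finset.sum_insert htT]
  have hcardS : S.card = T.card + 1 := by
    rw [hS, Finset.card_insert_of_notMem htT]
  obtain ⟨IH1, _⟩ := hurwitz_main m T hmT
  nth_rewrite 1 [hS]
  rw [Finset.sum_powerset_insert htT]
  have hb1 : ∑ J ∈ T.powerset,
      x * (x + ∑ i ∈ J, m i) ^ ((J.card : ℤ) - 1)
        * (y * (y + ∑ i ∈ S \ J, m i) ^ ((S.card : ℤ) - J.card - 1))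
      = y * hsum m T x (y + m t) := by
    rw [hsum, Finset.mul_sum]
    apply Finset.sum_congr rfl
    intro J hJ
    have hJT : J ⊆ T := Finset.mem_powerset.1 hJ
    have htJ : t ∉ J := fun h => htT (hJT h)
    have hcc : J.card ≤ T.card := Finset.card_le_card hJT
    have h1 : S \ J = insert t (T \ J) := by
      rw [hS]; exact Finset.insert_sdiff_of_notMem _ htJ
    have htTJ : t ∉ T \ J := fun h => htT (Finset.mem_sdiff.1 h).1
    have h2 : ∑ i ∈ insert t (T \ J), m i = m t + ∑ i ∈ T \ J, m i :=
      Finset.sum_insert htTJ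
    have h3 : ((S.card : ℤ) - J.card - 1) = ((T.card - J.card : ℕ) : ℤ) := by
      rw [hcardS, Nat.cast_sub hcc]; push_cast; ring
    rw [h1, h2, h3, zpow_natCast,
      show y + (m t + ∑ i ∈ T \ J, m i) = y + m t + ∑ i ∈ T \ J, m i by ring]
    ring
  have hb2 : ∑ J ∈ T.powerset,
      x * (x + ∑ i ∈ insert t J, m i) ^ (((insert t J).card : ℤ) - 1)
        * (y * (y + ∑ i ∈ S \ insert t J, m i) ^ ((S.card : ℤ) - (insert t J).card - 1))
      = x * hsum m T y (x + m t) := by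
    rw [hsum, Finset.mul_sum, sum_powerset_sdiff T
      (fun J => x * (x + ∑ i ∈ insert t J, m i) ^ (((insert t J).card : ℤ) - 1)
        * (y * (y + ∑ i ∈ S \ insert t J, m i) ^ ((S.card : ℤ) - (insert t J).card - 1)))]
    apply Finset.sum_congr rfl
    intro J hJ
    have hJT : J ⊆ T := Finset.mem_powerset.1 hJ
    have hTJT : T \ J ⊆ T := Finset.sdiff_subset
    have htTJ : t ∉ T \ J := fun h => htT (Finset.mem_sdiff.1 h).1
    have hcc : J.card ≤ T.card := Finset.card_le_card hJT
    have hcsd : (T \ J).card = T.card - J.card := Finset.card_sdiff_of_subset hJT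
    have h2 : ∑ i ∈ insert t (T \ J), m i = m t + ∑ i ∈ T \ J, m i :=
      Finset.sum_insert htTJ
    have h5 : S \ insert t (T \ J) = J := by
      rw [hS, sdiff_insert_comm htT hTJT, Finset.sdiff_sdiff_eq_self hJT]
    have h6 : ((S.card : ℤ) - (insert t (T \ J)).card - 1) = ((J.card : ℤ) - 1) := by
      simp only [hcardS, Finset.card_insert_of_notMem htTJ, hcsd]; omega
    have h7 : (((insert t (T \ J)).card : ℤ) - 1) = ((T.card - J.card : ℕ) : ℤ) := by
      simp only [Finset.card_insert_of_notMem htTJ, hcsd]; omega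
    rw [h2, h5, h6, h7, zpow_natCast,
      show x + (m t + ∑ i ∈ T \ J, m i) = x + m t + ∑ i ∈ T \ J, m i by ring]
    ring
  rw [hb1, hb2, IH1 x (y + m t) hx (by linarith), IH1 y (x + m t) hy (by linarith)]
  rw [show x + (y + m t) + ∑ i ∈ T, m i = x + y + ∑ i ∈ S, m i by rw [hsumS]; ring,
    show y + (x + m t) + ∑ i ∈ T, m i = x + y + ∑ i ∈ S, m i by rw [hsumS]; ring,
    show S.card - 1 = T.card by omega]
  ring

end Stmt14Aux

namespace Stmt14Aux

theorem sum_powerset_map {α β : Type*} [DecidableEq α] [DecidableEq β]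
    (s : Finset α) (f : α ↪ β) (F : Finset β → ℚ) :
    ∑ I ∈ (s.map f).powerset, F I = ∑ J ∈ s.powerset, F (J.map f) := by
  induction s using Finset.induction generalizing F with
  | empty => simp
  | @insert a s ha ih =>
    have hfa : f a ∉ s.map f := by
      intro h
      rcases Finset.mem_map.1 h with ⟨b, hb, hfb⟩
      exact ha (f.injective hfb ▸ hb)
    rw [Finset.map_insert, Finset.sum_powerset_insert hfa, Finset.sum_powerset_insert ha,
      ih F, ih (fun I => F (insert (f a) I))]
    congr 1
    apply Finset.sum_congr rfl
    intro J _
    rw [Finset.map_insert]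

theorem univ_fin_eq (n : ℕ) :
    (Finset.univ : Finset (Fin (n + 1))) = insert (Fin.last n) (Finset.univ.map Fin.castSuccEmb) := by
  rw [← Fin.Iio_last_eq_map, Finset.Iio_insert]
  simp [Finset.ext_iff, Fin.le_last]

theorem last_not_mem_map (n : ℕ) (J : Finset (Fin n)) : Fin.last n ∉ J.map Fin.castSuccEmb := by
  simp only [Finset.mem_map]
  rintro ⟨i, -, h⟩
  exact absurd h (Fin.castSucc_lt_last i).ne

/-- `C_d(m) = d^l` for `m : Fin (l+1) → ℕ` positive, `d = Σ m`. -/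
theorem Ccoef_top (l : ℕ) (m : Fin (l + 1) → ℕ) (hm : ∀ i, 0 < m i) :
    Ccoef m (∑ i, m i) = (∑ i, (m i : ℚ)) ^ l := by
  have hcast : ((∑ i, m i : ℕ) : ℚ) = ∑ i, (m i : ℚ) := Nat.cast_sum _ _
  have hdpos : 0 < ∑ i, m i := Finset.sum_pos (fun i _ => hm i) Finset.univ_nonempty
  have hd0 : ((∑ i, m i : ℕ) : ℚ) ≠ 0 := by positivity
  rw [Ccoef, Finset.sum_filter]
  have hcardu : (Finset.univ : Finset (Fin (l+1))).card = l + 1 := by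
    simp
  have step1 : ∀ I ∈ (Finset.univ : Finset (Fin (l+1))).powerset,
      (if (∑ i ∈ I, m i) < ∑ i, m i then
        ((∑ i, m i : ℕ) : ℚ) ^ ((I.card : ℤ) - 1) *
          ((∑ i, (m i : ℚ)) - ((∑ i, m i : ℕ) : ℚ)) ^ (((l + 1 : ℕ) : ℤ) - I.card - 1) *
          (((∑ i, m i : ℕ) : ℚ) - ∑ i ∈ I, (m i : ℚ)) else 0)
      = (if I.card = l then ((∑ i, m i : ℕ) : ℚ) ^ ((l : ℤ) - 1) *
          (((∑ i, m i : ℕ) : ℚ) - ∑ i ∈ I, (m i : ℚ)) else 0) := by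
    intro I hI
    have hIu : I ⊆ Finset.univ := Finset.mem_powerset.1 hI
    have hIc : I.card ≤ l + 1 := by
      calc I.card ≤ _ := Finset.card_le_card hIu
      _ = l + 1 := hcardu
    have hzero : (∑ i, (m i : ℚ)) - ((∑ i, m i : ℕ) : ℚ) = 0 := by rw [hcast]; ring
    rw [hzero]
    rcases Nat.lt_or_ge I.card l with hlt | hge
    · rw [zero_zpow _ (show ((l + 1 : ℕ) : ℤ) - I.card - 1 ≠ 0 by push_cast; omega),
        if_neg (show ¬ I.card = l by omega)]
      simp
    · rcases Nat.eq_or_lt_of_le hge with heq | hgt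
      · -- I.card = l
        have hne : I ≠ Finset.univ := by
          intro h
          rw [h, hcardu] at heq
          omega
        obtain ⟨t, _, htI⟩ := Finset.exists_of_ssubset (Finset.ssubset_univ_iff.2 hne)
        have hsum_lt : (∑ i ∈ I, m i) < ∑ i, m i :=
          Finset.sum_lt_sum_of_subset hIu (Finset.mem_univ t) htI (hm t)
            (fun j _ _ => Nat.zero_le _)
        rw [show ((l + 1 : ℕ) : ℤ) - (I.card : ℤ) - 1 = 0 by push_cast; omega, zpow_zero,
          if_pos hsum_lt, if_pos heq.symm, show ((I.card : ℤ) - 1) = (l : ℤ) - 1 by omega]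
        ring
      · -- I.card = l + 1 hence I = univ
        have hIcard : I.card = l + 1 := by omega
        have hIuniv : I = Finset.univ := Finset.eq_univ_of_card I (by rw [hIcard, Fintype.card_fin])
        rw [if_neg (by rw [hIuniv]; exact lt_irrefl _), if_neg (by omega)]
  rw [Finset.sum_congr rfl step1]
  rw [sum_powerset_sdiff (Finset.univ : Finset (Fin (l+1)))
    (fun I => if I.card = l then ((∑ i, m i : ℕ) : ℚ) ^ ((l : ℤ) - 1) *
          (((∑ i, m i : ℕ) : ℚ) - ∑ i ∈ I, (m i : ℚ)) else 0)]
  have step2 : ∀ I ∈ (Finset.univ : Finset (Fin (l+1))).powerset,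
      (if (Finset.univ \ I).card = l then ((∑ i, m i : ℕ) : ℚ) ^ ((l : ℤ) - 1) *
          (((∑ i, m i : ℕ) : ℚ) - ∑ i ∈ Finset.univ \ I, (m i : ℚ)) else 0)
      = (if I.card = 1 then ((∑ i, m i : ℕ) : ℚ) ^ ((l : ℤ) - 1) * (∑ i ∈ I, (m i : ℚ)) else 0) := by
    intro I hI
    have hIu : I ⊆ Finset.univ := Finset.mem_powerset.1 hI
    have hIc : I.card ≤ l + 1 := by
      calc I.card ≤ _ := Finset.card_le_card hIu
      _ = l + 1 := hcardu
    have hcd : (Finset.univ \ I).card = (l + 1) - I.card := by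
      rw [Finset.card_sdiff_of_subset hIu, hcardu]
    have hsplit : (∑ i ∈ Finset.univ \ I, (m i : ℚ)) + ∑ i ∈ I, (m i : ℚ) = ∑ i, (m i : ℚ) :=
      Finset.sum_sdiff hIu
    have hrest : ((∑ i, m i : ℕ) : ℚ) - ∑ i ∈ Finset.univ \ I, (m i : ℚ) = ∑ i ∈ I, (m i : ℚ) := by
      rw [hcast, ← hsplit]; ring
    rw [hcd, hrest]
    by_cases h1 : I.card = 1
    · rw [if_pos (by omega), if_pos h1]
    · rw [if_neg (by omega), if_neg h1]
  rw [Finset.sum_congr rfl step2, ← Finset.sum_filter, ← Finset.powersetCard_eq_filter,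
    Finset.powersetCard_one, Finset.sum_map]
  simp only [Function.Embedding.coeFn_mk, Finset.sum_singleton]
  rw [← Finset.mul_sum]
  rw [show (∑ i, (m i : ℚ)) = ((∑ i, m i : ℕ) : ℚ) ^ (1:ℤ) by rw [zpow_one, hcast]]
  rw [← zpow_add₀ hd0]
  rw [show ((l:ℤ) - 1 + 1) = ((l : ℕ) : ℤ) by omega, zpow_natCast, hcast]
  norm_num


theorem Ccoef_split (n : ℕ) (m : Fin (n + 2) → ℕ) (r : ℕ) :
    Ccoef m r
      = ∑ J ∈ (Finset.univ : Finset (Fin (n + 1))).powerset,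
          ((if (∑ i ∈ J, m i.castSucc) < r then
              (r : ℚ) ^ ((J.card : ℤ) - 1)
                * ((∑ i, (m i : ℚ)) - r) ^ (((n + 2 : ℕ) : ℤ) - J.card - 1)
                * ((r : ℚ) - ∑ i ∈ J, (m i.castSucc : ℚ))
            else 0)
          + (if (∑ i ∈ J, m i.castSucc) + m (Fin.last (n + 1)) < r then
              (r : ℚ) ^ (J.card : ℤ)
                * ((∑ i, (m i : ℚ)) - r) ^ (((n + 2 : ℕ) : ℤ) - J.card - 2)
                * ((r : ℚ) - (∑ i ∈ J, (m i.castSucc : ℚ)) - m (Fin.last (n + 1)))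
            else 0)) := by
  rw [Ccoef, Finset.sum_filter]
  nth_rewrite 1 [univ_fin_eq (n + 1)]
  rw [Finset.sum_powerset_insert (last_not_mem_map (n + 1) Finset.univ)]
  rw [sum_powerset_map, sum_powerset_map]
  rw [← Finset.sum_add_distrib]
  apply Finset.sum_congr rfl
  intro J _
  congr 1
  · -- first branch
    have hsumN : ∑ i ∈ J.map Fin.castSuccEmb, m i = ∑ i ∈ J, m i.castSucc := by
      rw [Finset.sum_map]; rfl
    have hsumQ : ∑ i ∈ J.map Fin.castSuccEmb, (m i : ℚ) = ∑ i ∈ J, (m i.castSucc : ℚ) := by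
      rw [Finset.sum_map]; rfl
    rw [hsumN, hsumQ, Finset.card_map]
  · -- second branch
    have hLJ : Fin.last (n + 1) ∉ J.map Fin.castSuccEmb := last_not_mem_map _ _
    have hcard : (insert (Fin.last (n + 1)) (J.map Fin.castSuccEmb)).card = J.card + 1 := by
      rw [Finset.card_insert_of_notMem hLJ, Finset.card_map]
    have hsumN : ∑ i ∈ insert (Fin.last (n + 1)) (J.map Fin.castSuccEmb), m i
        = m (Fin.last (n + 1)) + ∑ i ∈ J, m i.castSucc := by
      rw [Finset.sum_insert hLJ, Finset.sum_map]; rfl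
    have hsumQ : ∑ i ∈ insert (Fin.last (n + 1)) (J.map Fin.castSuccEmb), (m i : ℚ)
        = (m (Fin.last (n + 1)) : ℚ) + ∑ i ∈ J, (m i.castSucc : ℚ) := by
      rw [Finset.sum_insert hLJ, Finset.sum_map]; rfl
    rw [hsumN, hsumQ, hcard]
    have e1 : ((J.card + 1 : ℕ) : ℤ) - 1 = (J.card : ℤ) := by push_cast; ring
    have e2 : ((n + 2 : ℕ) : ℤ) - ((J.card + 1 : ℕ) : ℤ) - 1
        = ((n + 2 : ℕ) : ℤ) - (J.card : ℤ) - 2 := by push_cast; ring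
    rw [e1, e2]
    split_ifs with h1 h2 h2
    · ring
    · omega
    · omega
    · rfl

theorem Ccoef_merge (n : ℕ) (m : Fin (n + 2) → ℕ) (r : ℕ) :
    ∑ j : Fin (n + 1), (m j.castSucc : ℚ) *
        Ccoef (fun i : Fin (n + 1) =>
          if i = j then m j.castSucc + m (Fin.last (n + 1)) else m i.castSucc) r
      = ∑ J ∈ (Finset.univ : Finset (Fin (n + 1))).powerset,
          ((if (∑ i ∈ J, m i.castSucc) < r then
              ((∑ i, (m i : ℚ)) - m (Fin.last (n + 1)) - ∑ i ∈ J, (m i.castSucc : ℚ))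
                * ((r : ℚ) ^ ((J.card : ℤ) - 1)
                  * ((∑ i, (m i : ℚ)) - r) ^ (((n + 1 : ℕ) : ℤ) - J.card - 1)
                  * ((r : ℚ) - ∑ i ∈ J, (m i.castSucc : ℚ)))
            else 0)
          + (if (∑ i ∈ J, m i.castSucc) + m (Fin.last (n + 1)) < r then
              (∑ i ∈ J, (m i.castSucc : ℚ))
                * ((r : ℚ) ^ ((J.card : ℤ) - 1)
                  * ((∑ i, (m i : ℚ)) - r) ^ (((n + 1 : ℕ) : ℤ) - J.card - 1)
                  * ((r : ℚ) - (∑ i ∈ J, (m i.castSucc : ℚ)) - m (Fin.last (n + 1))))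
            else 0)) := by
  set M := m (Fin.last (n + 1)) with hM
  -- rewrite each Ccoef (m' j)
  have hCj : ∀ j : Fin (n + 1),
      Ccoef (fun i : Fin (n + 1) => if i = j then m j.castSucc + M else m i.castSucc) r
        = ∑ J ∈ (Finset.univ : Finset (Fin (n + 1))).powerset,
            (if (∑ i ∈ J, m i.castSucc) + (if j ∈ J then M else 0) < r then
              (r : ℚ) ^ ((J.card : ℤ) - 1)
                * ((∑ i, (m i : ℚ)) - r) ^ (((n + 1 : ℕ) : ℤ) - J.card - 1)
                * ((r : ℚ) - ((∑ i ∈ J, (m i.castSucc : ℚ)) + (if j ∈ J then (M : ℚ) else 0)))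
            else 0) := by
    intro j
    rw [Ccoef, Finset.sum_filter]
    apply Finset.sum_congr rfl
    intro J _
    have hsN : ∀ J' : Finset (Fin (n + 1)),
        (∑ i ∈ J', if i = j then m j.castSucc + M else m i.castSucc)
          = (∑ i ∈ J', m i.castSucc) + (if j ∈ J' then M else 0) := by
      intro J'
      have : ∀ i, (if i = j then m j.castSucc + M else m i.castSucc)
          = m i.castSucc + (if i = j then M else 0) := by
        intro i
        by_cases h : i = j <;> simp [h]
      rw [Finset.sum_congr rfl (fun i _ => this i), Finset.sum_add_distrib,
        Finset.sum_ite_eq' J' j (fun _ => M)]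
    have hsQ : ∀ J' : Finset (Fin (n + 1)),
        (∑ i ∈ J', ((if i = j then m j.castSucc + M else m i.castSucc : ℕ) : ℚ))
          = (∑ i ∈ J', (m i.castSucc : ℚ)) + (if j ∈ J' then (M : ℚ) else 0) := by
      intro J'
      have := hsN J'
      have hc := congrArg (fun x : ℕ => (x : ℚ)) this
      push_cast at hc ⊢
      convert hc using 2 <;> simp
    have htot : (∑ i, ((if i = j then m j.castSucc + M else m i.castSucc : ℕ) : ℚ))
        = ∑ i, (m i : ℚ) := by
      rw [hsQ Finset.univ, if_pos (Finset.mem_univ j)]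
      have : (∑ i : Fin (n + 2), (m i : ℚ))
          = (∑ i : Fin (n + 1), (m i.castSucc : ℚ)) + (M : ℚ) := by
        rw [hM, Fin.sum_univ_castSucc (f := fun i : Fin (n + 2) => (m i : ℚ))]
      rw [this]
    rw [hsN J, hsQ J, htot]
  simp only [hCj, Finset.mul_sum]
  rw [Finset.sum_comm]
  apply Finset.sum_congr rfl
  intro J _
  -- split the j-sum into j ∈ J and j ∉ J
  rw [← Finset.sum_sdiff (Finset.subset_univ J)]
  have hJpart : ∑ j ∈ J, (m j.castSucc : ℚ) *
      (if (∑ i ∈ J, m i.castSucc) + (if j ∈ J then M else 0) < r then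
        (r : ℚ) ^ ((J.card : ℤ) - 1)
          * ((∑ i, (m i : ℚ)) - r) ^ (((n + 1 : ℕ) : ℤ) - J.card - 1)
          * ((r : ℚ) - ((∑ i ∈ J, (m i.castSucc : ℚ)) + (if j ∈ J then (M : ℚ) else 0)))
      else 0)
      = (if (∑ i ∈ J, m i.castSucc) + M < r then
          (∑ i ∈ J, (m i.castSucc : ℚ))
            * ((r : ℚ) ^ ((J.card : ℤ) - 1)
              * ((∑ i, (m i : ℚ)) - r) ^ (((n + 1 : ℕ) : ℤ) - J.card - 1)
              * ((r : ℚ) - (∑ i ∈ J, (m i.castSucc : ℚ)) - M))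
        else 0) := by
    have : ∀ j ∈ J, (m j.castSucc : ℚ) *
        (if (∑ i ∈ J, m i.castSucc) + (if j ∈ J then M else 0) < r then
          (r : ℚ) ^ ((J.card : ℤ) - 1)
            * ((∑ i, (m i : ℚ)) - r) ^ (((n + 1 : ℕ) : ℤ) - J.card - 1)
            * ((r : ℚ) - ((∑ i ∈ J, (m i.castSucc : ℚ)) + (if j ∈ J then (M : ℚ) else 0)))
        else 0)
        = (m j.castSucc : ℚ) *
          (if (∑ i ∈ J, m i.castSucc) + M < r then
            (r : ℚ) ^ ((J.card : ℤ) - 1)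
              * ((∑ i, (m i : ℚ)) - r) ^ (((n + 1 : ℕ) : ℤ) - J.card - 1)
              * ((r : ℚ) - (∑ i ∈ J, (m i.castSucc : ℚ)) - M)
          else 0) := by
      intro j hj
      rw [if_pos hj, if_pos hj]
      congr 1
      split_ifs with h
      · ring
      · rfl
    rw [Finset.sum_congr rfl this, ← Finset.sum_mul]
    split_ifs with h
    · ring
    · rw [mul_zero]
  have hJcpart : ∑ j ∈ Finset.univ \ J, (m j.castSucc : ℚ) *
      (if (∑ i ∈ J, m i.castSucc) + (if j ∈ J then M else 0) < r then
        (r : ℚ) ^ ((J.card : ℤ) - 1)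
          * ((∑ i, (m i : ℚ)) - r) ^ (((n + 1 : ℕ) : ℤ) - J.card - 1)
          * ((r : ℚ) - ((∑ i ∈ J, (m i.castSucc : ℚ)) + (if j ∈ J then (M : ℚ) else 0)))
      else 0)
      = (if (∑ i ∈ J, m i.castSucc) < r then
          ((∑ i, (m i : ℚ)) - M - ∑ i ∈ J, (m i.castSucc : ℚ))
            * ((r : ℚ) ^ ((J.card : ℤ) - 1)
              * ((∑ i, (m i : ℚ)) - r) ^ (((n + 1 : ℕ) : ℤ) - J.card - 1)
              * ((r : ℚ) - ∑ i ∈ J, (m i.castSucc : ℚ)))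
        else 0) := by
    have : ∀ j ∈ Finset.univ \ J, (m j.castSucc : ℚ) *
        (if (∑ i ∈ J, m i.castSucc) + (if j ∈ J then M else 0) < r then
          (r : ℚ) ^ ((J.card : ℤ) - 1)
            * ((∑ i, (m i : ℚ)) - r) ^ (((n + 1 : ℕ) : ℤ) - J.card - 1)
            * ((r : ℚ) - ((∑ i ∈ J, (m i.castSucc : ℚ)) + (if j ∈ J then (M : ℚ) else 0)))
        else 0)
        = (m j.castSucc : ℚ) *
          (if (∑ i ∈ J, m i.castSucc) < r then
            (r : ℚ) ^ ((J.card : ℤ) - 1)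
              * ((∑ i, (m i : ℚ)) - r) ^ (((n + 1 : ℕ) : ℤ) - J.card - 1)
              * ((r : ℚ) - ∑ i ∈ J, (m i.castSucc : ℚ))
          else 0) := by
      intro j hj
      have hjJ : j ∉ J := (Finset.mem_sdiff.1 hj).2
      rw [if_neg hjJ, if_neg hjJ]
      simp only [Nat.add_zero, add_zero]
    rw [Finset.sum_congr rfl this, ← Finset.sum_mul]
    have hcompl : ∑ j ∈ Finset.univ \ J, (m j.castSucc : ℚ)
        = (∑ i, (m i : ℚ)) - M - ∑ i ∈ J, (m i.castSucc : ℚ) := by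
      have h1 : (∑ j ∈ Finset.univ \ J, (m j.castSucc : ℚ))
          + ∑ j ∈ J, (m j.castSucc : ℚ) = ∑ j : Fin (n + 1), (m j.castSucc : ℚ) :=
        Finset.sum_sdiff (Finset.subset_univ J)
      have h2 : (∑ i : Fin (n + 2), (m i : ℚ))
          = (∑ i : Fin (n + 1), (m i.castSucc : ℚ)) + (M : ℚ) := by
        rw [hM, Fin.sum_univ_castSucc (f := fun i : Fin (n + 2) => (m i : ℚ))]
      rw [h2, ← h1]
      ring
    rw [hcompl]
    split_ifs with h
    · ring
    · rw [mul_zero]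
  rw [hJpart, hJcpart, add_comm]



theorem Dr (n : ℕ) (m : Fin (n + 2) → ℕ) (r : ℕ)
    (hr1 : 1 ≤ r) (hr2 : r < ∑ i, m i) :
    Ccoef m r - ∑ j : Fin (n + 1), (m j.castSucc : ℚ) *
        Ccoef (fun i : Fin (n + 1) =>
          if i = j then m j.castSucc + m (Fin.last (n + 1)) else m i.castSucc) r
      = ∑ J ∈ (Finset.univ : Finset (Fin (n + 1))).powerset,
          (if (∑ i ∈ J, m i.castSucc) < r ∧
                r ≤ (∑ i ∈ J, m i.castSucc) + m (Fin.last (n + 1)) then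
            (r : ℚ) ^ ((J.card : ℤ) - 1)
              * ((∑ i, (m i : ℚ)) - r) ^ (((n + 1 : ℕ) : ℤ) - J.card - 1)
              * ((r : ℚ) - ∑ i ∈ J, (m i.castSucc : ℚ))
              * ((m (Fin.last (n + 1)) : ℚ) + (∑ i ∈ J, (m i.castSucc : ℚ)) - r)
          else 0) := by
  rw [Ccoef_split n m r, Ccoef_merge n m r, ← Finset.sum_sub_distrib]
  apply Finset.sum_congr rfl
  intro J _
  have hr0 : (r : ℚ) ≠ 0 := by
    have : (0 : ℚ) < r := by exact_mod_cast hr1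
    exact this.ne'
  have hdr : (∑ i, (m i : ℚ)) - r ≠ 0 := by
    have h1 : (r : ℚ) < ((∑ i, m i : ℕ) : ℚ) := by exact_mod_cast hr2
    rw [Nat.cast_sum] at h1
    exact sub_ne_zero_of_ne h1.ne'
  have e1 : ((n + 2 : ℕ) : ℤ) - J.card - 1 = (((n + 1 : ℕ) : ℤ) - J.card - 1) + 1 := by
    push_cast; ring
  have e2 : ((n + 2 : ℕ) : ℤ) - J.card - 2 = ((n + 1 : ℕ) : ℤ) - J.card - 1 := by
    push_cast; ring
  have hpow1 : ((∑ i, (m i : ℚ)) - r) ^ (((n + 2 : ℕ) : ℤ) - J.card - 1)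
      = ((∑ i, (m i : ℚ)) - r) ^ (((n + 1 : ℕ) : ℤ) - J.card - 1) * ((∑ i, (m i : ℚ)) - r) := by
    rw [e1, zpow_add_one₀ hdr]
  have hpow2 : (r : ℚ) ^ (J.card : ℤ) = (r : ℚ) ^ ((J.card : ℤ) - 1) * r := by
    have h := zpow_add_one₀ hr0 ((J.card : ℤ) - 1)
    rw [show (J.card : ℤ) - 1 + 1 = (J.card : ℤ) by ring] at h
    exact h
  rw [hpow1, e2, hpow2]
  by_cases h1 : (∑ i ∈ J, m i.castSucc) < r
  · by_cases h2 : (∑ i ∈ J, m i.castSucc) + m (Fin.last (n + 1)) < r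
    · rw [if_pos h1, if_pos h2, if_pos h1, if_pos h2,
        if_neg (show ¬((∑ i ∈ J, m i.castSucc) < r ∧
          r ≤ (∑ i ∈ J, m i.castSucc) + m (Fin.last (n + 1))) by omega)]
      ring
    · rw [if_pos h1, if_neg h2, if_pos h1, if_neg h2,
        if_pos (show (∑ i ∈ J, m i.castSucc) < r ∧
          r ≤ (∑ i ∈ J, m i.castSucc) + m (Fin.last (n + 1)) by omega)]
      ring
  · have h2 : ¬((∑ i ∈ J, m i.castSucc) + m (Fin.last (n + 1)) < r) := by omega
    rw [if_neg h1, if_neg h2, if_neg h1, if_neg h2,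
      if_neg (show ¬((∑ i ∈ J, m i.castSucc) < r ∧
        r ≤ (∑ i ∈ J, m i.castSucc) + m (Fin.last (n + 1))) by omega)]
    ring


theorem inner_r (n : ℕ) (m : Fin (n + 2) → ℕ) (e : ℕ) (he : ∑ i, m i = e + 1)
    (J : Finset (Fin (n + 1))) :
    ∑ r ∈ Finset.Icc 1 e,
      (if (∑ i ∈ J, m i.castSucc) < r ∧
            r ≤ (∑ i ∈ J, m i.castSucc) + m (Fin.last (n + 1)) then
        (r : ℚ) ^ ((J.card : ℤ) - 1)
          * ((∑ i, (m i : ℚ)) - r) ^ (((n + 1 : ℕ) : ℤ) - J.card - 1)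
          * ((r : ℚ) - ∑ i ∈ J, (m i.castSucc : ℚ))
          * ((m (Fin.last (n + 1)) : ℚ) + (∑ i ∈ J, (m i.castSucc : ℚ)) - r)
      else 0)
    = ∑ u ∈ Finset.Icc 1 (m (Fin.last (n + 1))),
        ((((∑ i ∈ J, m i.castSucc) + u : ℕ) : ℚ) ^ ((J.card : ℤ) - 1)
          * ((∑ i, (m i : ℚ)) - (((∑ i ∈ J, m i.castSucc) + u : ℕ) : ℚ))
              ^ (((n + 1 : ℕ) : ℤ) - J.card - 1)
          * ((((∑ i ∈ J, m i.castSucc) + u : ℕ) : ℚ) - ∑ i ∈ J, (m i.castSucc : ℚ))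
          * ((m (Fin.last (n + 1)) : ℚ) + (∑ i ∈ J, (m i.castSucc : ℚ))
              - (((∑ i ∈ J, m i.castSucc) + u : ℕ) : ℚ))) := by
  have hsplit : (∑ i : Fin (n + 1), m i.castSucc) + m (Fin.last (n + 1)) = ∑ i, m i :=
    (Fin.sum_univ_castSucc (f := fun i : Fin (n + 2) => m i)).symm
  have hsNle : (∑ i ∈ J, m i.castSucc) ≤ ∑ i : Fin (n + 1), m i.castSucc :=
    Finset.sum_le_sum_of_subset (Finset.subset_univ J)
  have hsM : (∑ i ∈ J, m i.castSucc) + m (Fin.last (n + 1)) ≤ e + 1 := by omega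
  have hQ : (∑ i ∈ J, (m i.castSucc : ℚ)) = ((∑ i ∈ J, m i.castSucc : ℕ) : ℚ) :=
    (Nat.cast_sum _ _).symm
  have h1 := Finset.sum_Icc_succ_top (show 1 ≤ e + 1 by omega)
    (fun r : ℕ => if (∑ i ∈ J, m i.castSucc) < r ∧
            r ≤ (∑ i ∈ J, m i.castSucc) + m (Fin.last (n + 1)) then
        (r : ℚ) ^ ((J.card : ℤ) - 1)
          * ((∑ i, (m i : ℚ)) - r) ^ (((n + 1 : ℕ) : ℤ) - J.card - 1)
          * ((r : ℚ) - ∑ i ∈ J, (m i.castSucc : ℚ))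
          * ((m (Fin.last (n + 1)) : ℚ) + (∑ i ∈ J, (m i.castSucc : ℚ)) - r)
      else 0)
  have h2 : (if (∑ i ∈ J, m i.castSucc) < e + 1 ∧
        e + 1 ≤ (∑ i ∈ J, m i.castSucc) + m (Fin.last (n + 1)) then
      ((e + 1 : ℕ) : ℚ) ^ ((J.card : ℤ) - 1)
        * ((∑ i, (m i : ℚ)) - ((e + 1 : ℕ) : ℚ)) ^ (((n + 1 : ℕ) : ℤ) - J.card - 1)
        * (((e + 1 : ℕ) : ℚ) - ∑ i ∈ J, (m i.castSucc : ℚ))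
        * ((m (Fin.last (n + 1)) : ℚ) + (∑ i ∈ J, (m i.castSucc : ℚ)) - ((e + 1 : ℕ) : ℚ))
    else 0) = 0 := by
    split_ifs with h
    · have heq : (∑ i ∈ J, m i.castSucc) + m (Fin.last (n + 1)) = e + 1 := by omega
      have hz : (m (Fin.last (n + 1)) : ℚ) + (∑ i ∈ J, (m i.castSucc : ℚ))
          - ((e + 1 : ℕ) : ℚ) = 0 := by
        rw [hQ, ← heq]
        push_cast
        ring
      rw [hz, mul_zero]
    · rfl
  have h3 : ∑ r ∈ Finset.Icc 1 e,
      (if (∑ i ∈ J, m i.castSucc) < r ∧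
            r ≤ (∑ i ∈ J, m i.castSucc) + m (Fin.last (n + 1)) then
        (r : ℚ) ^ ((J.card : ℤ) - 1)
          * ((∑ i, (m i : ℚ)) - r) ^ (((n + 1 : ℕ) : ℤ) - J.card - 1)
          * ((r : ℚ) - ∑ i ∈ J, (m i.castSucc : ℚ))
          * ((m (Fin.last (n + 1)) : ℚ) + (∑ i ∈ J, (m i.castSucc : ℚ)) - r)
      else 0)
      = ∑ r ∈ Finset.Icc 1 (e + 1),
      (if (∑ i ∈ J, m i.castSucc) < r ∧
            r ≤ (∑ i ∈ J, m i.castSucc) + m (Fin.last (n + 1)) then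
        (r : ℚ) ^ ((J.card : ℤ) - 1)
          * ((∑ i, (m i : ℚ)) - r) ^ (((n + 1 : ℕ) : ℤ) - J.card - 1)
          * ((r : ℚ) - ∑ i ∈ J, (m i.castSucc : ℚ))
          * ((m (Fin.last (n + 1)) : ℚ) + (∑ i ∈ J, (m i.castSucc : ℚ)) - r)
      else 0) := by
    rw [h1, h2, add_zero]
  rw [h3, ← Finset.sum_filter]
  have hset : (Finset.Icc 1 (e + 1)).filter (fun r => (∑ i ∈ J, m i.castSucc) < r ∧
        r ≤ (∑ i ∈ J, m i.castSucc) + m (Fin.last (n + 1)))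
      = (Finset.Icc 1 (m (Fin.last (n + 1)))).map
          (addLeftEmbedding (∑ i ∈ J, m i.castSucc)) := by
    rw [Finset.map_add_left_Icc]
    ext r
    simp only [Finset.mem_filter, Finset.mem_Icc]
    omega
  rw [hset, Finset.sum_map]
  apply Finset.sum_congr rfl
  intro u _
  simp only [addLeftEmbedding_apply]

theorem inner_u (n : ℕ) (m : Fin (n + 2) → ℕ) (hm : ∀ i, 0 < m i) (u : ℕ) (hu1 : 1 ≤ u)
    (hu2 : u < m (Fin.last (n + 1))) :
    ∑ J ∈ (Finset.univ : Finset (Fin (n + 1))).powerset,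
        ((((∑ i ∈ J, m i.castSucc) + u : ℕ) : ℚ) ^ ((J.card : ℤ) - 1)
          * ((∑ i, (m i : ℚ)) - (((∑ i ∈ J, m i.castSucc) + u : ℕ) : ℚ))
              ^ (((n + 1 : ℕ) : ℤ) - J.card - 1)
          * ((((∑ i ∈ J, m i.castSucc) + u : ℕ) : ℚ) - ∑ i ∈ J, (m i.castSucc : ℚ))
          * ((m (Fin.last (n + 1)) : ℚ) + (∑ i ∈ J, (m i.castSucc : ℚ))
              - (((∑ i ∈ J, m i.castSucc) + u : ℕ) : ℚ)))
      = (m (Fin.last (n + 1)) : ℚ) * (∑ i, (m i : ℚ)) ^ n := by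
  have hx : (0 : ℚ) < (u : ℚ) := by exact_mod_cast hu1
  have hy : (0 : ℚ) < (m (Fin.last (n + 1)) : ℚ) - (u : ℚ) := by
    have : (u : ℚ) < (m (Fin.last (n + 1)) : ℚ) := by exact_mod_cast hu2
    linarith
  have hsplitQ : (∑ i, (m i : ℚ))
      = (∑ i : Fin (n + 1), (m i.castSucc : ℚ)) + (m (Fin.last (n + 1)) : ℚ) :=
    Fin.sum_univ_castSucc (f := fun i : Fin (n + 2) => (m i : ℚ))
  have h2 := hurwitz2 (fun i : Fin (n + 1) => (m i.castSucc : ℚ)) Finset.univ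
    Finset.univ_nonempty (fun i _ => by positivity)
    (u : ℚ) ((m (Fin.last (n + 1)) : ℚ) - (u : ℚ)) hx hy
  simp only [Finset.card_univ, Fintype.card_fin] at h2
  have perJ : ∀ J ∈ (Finset.univ : Finset (Fin (n + 1))).powerset,
      ((((∑ i ∈ J, m i.castSucc) + u : ℕ) : ℚ) ^ ((J.card : ℤ) - 1)
          * ((∑ i, (m i : ℚ)) - (((∑ i ∈ J, m i.castSucc) + u : ℕ) : ℚ))
              ^ (((n + 1 : ℕ) : ℤ) - J.card - 1)
          * ((((∑ i ∈ J, m i.castSucc) + u : ℕ) : ℚ) - ∑ i ∈ J, (m i.castSucc : ℚ))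
          * ((m (Fin.last (n + 1)) : ℚ) + (∑ i ∈ J, (m i.castSucc : ℚ))
              - (((∑ i ∈ J, m i.castSucc) + u : ℕ) : ℚ)))
        = (u : ℚ) * ((u : ℚ) + ∑ i ∈ J, (m i.castSucc : ℚ)) ^ ((J.card : ℤ) - 1)
          * (((m (Fin.last (n + 1)) : ℚ) - (u : ℚ)) *
            (((m (Fin.last (n + 1)) : ℚ) - (u : ℚ))
              + ∑ i ∈ Finset.univ \ J, (m i.castSucc : ℚ)) ^ (((n + 1 : ℕ) : ℤ) - J.card - 1)) := by
    intro J _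
    have hs := Finset.sum_sdiff (Finset.subset_univ J) (f := fun i => (m i.castSucc : ℚ))
    have hru : (((∑ i ∈ J, m i.castSucc) + u : ℕ) : ℚ)
        = (u : ℚ) + ∑ i ∈ J, (m i.castSucc : ℚ) := by
      push_cast
      ring
    rw [hru]
    have hbase : (∑ i, (m i : ℚ)) - ((u : ℚ) + ∑ i ∈ J, (m i.castSucc : ℚ))
        = ((m (Fin.last (n + 1)) : ℚ) - (u : ℚ))
          + ∑ i ∈ Finset.univ \ J, (m i.castSucc : ℚ) := by
      rw [hsplitQ, ← hs]
      ring
    rw [hbase]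
    ring
  rw [Finset.sum_congr rfl perJ, h2]
  rw [show (u : ℚ) + ((m (Fin.last (n + 1)) : ℚ) - (u : ℚ)) = (m (Fin.last (n + 1)) : ℚ) by ring]
  rw [show (m (Fin.last (n + 1)) : ℚ) + ∑ i : Fin (n + 1), (m i.castSucc : ℚ)
      = ∑ i, (m i : ℚ) by rw [hsplitQ]; ring]
  norm_num


end Stmt14Aux

open Stmt14Aux in
/-- The recurrence
`H(m₁,…,m_k) = m_k² (m₁+⋯+m_k)^{k−2} + Σ_{j=1}^{k−1} m_j H(m₁,…,m_j+m_k,…,m_{k−1})`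
for `k ≥ 2` (here `k = n + 2`). -/
theorem stmt14 (n : ℕ) (m : Fin (n + 2) → ℕ) (hm : ∀ i, 0 < m i) :
    H m = (m (Fin.last (n + 1)) : ℚ) ^ 2 * (∑ i, (m i : ℚ)) ^ n +
      ∑ j : Fin (n + 1), (m j.castSucc : ℚ) *
        H (fun i : Fin (n + 1) =>
          if i = j then m j.castSucc + m (Fin.last (n + 1)) else m i.castSucc) := by
  have hdpos : 0 < ∑ i, m i := Finset.sum_pos (fun i _ => hm i) Finset.univ_nonempty
  obtain ⟨e, he⟩ : ∃ e, ∑ i, m i = e + 1 := ⟨(∑ i, m i) - 1, by omega⟩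
  have hsplit : (∑ i : Fin (n + 1), m i.castSucc) + m (Fin.last (n + 1)) = ∑ i, m i :=
    (Fin.sum_univ_castSucc (f := fun i : Fin (n + 2) => m i)).symm
  have hsplitQ : (∑ i, (m i : ℚ))
      = (∑ i : Fin (n + 1), (m i.castSucc : ℚ)) + (m (Fin.last (n + 1)) : ℚ) :=
    Fin.sum_univ_castSucc (f := fun i : Fin (n + 2) => (m i : ℚ))
  have hsum' : ∀ j : Fin (n + 1),
      (∑ i : Fin (n + 1),
        (if i = j then m j.castSucc + m (Fin.last (n + 1)) else m i.castSucc)) = ∑ i, m i := by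
    intro j
    have hpt : ∀ i : Fin (n + 1),
        (if i = j then m j.castSucc + m (Fin.last (n + 1)) else m i.castSucc)
          = m i.castSucc + (if i = j then m (Fin.last (n + 1)) else 0) := by
      intro i; by_cases h : i = j <;> simp [h]
    rw [Finset.sum_congr rfl (fun i _ => hpt i), Finset.sum_add_distrib,
      Finset.sum_ite_eq' Finset.univ j (fun _ => m (Fin.last (n + 1))),
      if_pos (Finset.mem_univ j)]
    exact hsplit
  have hHj : ∀ j : Fin (n + 1),
      H (fun i : Fin (n + 1) =>
          if i = j then m j.castSucc + m (Fin.last (n + 1)) else m i.castSucc)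
        = ∑ r ∈ Finset.Icc 1 (∑ i, m i),
            Ccoef (fun i : Fin (n + 1) =>
              if i = j then m j.castSucc + m (Fin.last (n + 1)) else m i.castSucc) r := by
    intro j
    rw [H, hsum' j]
  simp only [hHj]
  rw [H]
  simp only [Finset.mul_sum]
  rw [Finset.sum_comm]
  have key : ∑ r ∈ Finset.Icc 1 (∑ i, m i), (Ccoef m r
      - ∑ j : Fin (n + 1), (m j.castSucc : ℚ) *
          Ccoef (fun i : Fin (n + 1) =>
            if i = j then m j.castSucc + m (Fin.last (n + 1)) else m i.castSucc) r)
      = (m (Fin.last (n + 1)) : ℚ) ^ 2 * (∑ i, (m i : ℚ)) ^ n := by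
    have hm' : ∀ j i, 0 < (fun i : Fin (n + 1) =>
        if i = j then m j.castSucc + m (Fin.last (n + 1)) else m i.castSucc) i := by
      intro j i
      by_cases h : i = j <;> simp [h] <;> [exact Or.inl (hm _); exact hm _]
    have htopC : Ccoef m (e + 1) = (∑ i, (m i : ℚ)) ^ (n + 1) := by
      rw [← he]; exact Ccoef_top (n + 1) m hm
    have htopCj : ∀ j : Fin (n + 1),
        Ccoef (fun i : Fin (n + 1) =>
          if i = j then m j.castSucc + m (Fin.last (n + 1)) else m i.castSucc) (e + 1)
        = (∑ i, (m i : ℚ)) ^ n := by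
      intro j
      rw [← he, ← hsum' j, Ccoef_top n _ (hm' j)]
      congr 1
      rw [← Nat.cast_sum, ← Nat.cast_sum, hsum' j]
    rw [he, Finset.sum_Icc_succ_top (show 1 ≤ e + 1 by omega)]
    have hmid : ∑ r ∈ Finset.Icc 1 e, (Ccoef m r
        - ∑ j : Fin (n + 1), (m j.castSucc : ℚ) *
            Ccoef (fun i : Fin (n + 1) =>
              if i = j then m j.castSucc + m (Fin.last (n + 1)) else m i.castSucc) r)
        = ((m (Fin.last (n + 1)) : ℚ) * ((m (Fin.last (n + 1)) : ℚ) * (∑ i, (m i : ℚ)) ^ n))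
          - ((m (Fin.last (n + 1)) : ℚ) * (∑ i, (m i : ℚ)) ^ n) := by
      have hDr : ∀ r ∈ Finset.Icc 1 e, (Ccoef m r
          - ∑ j : Fin (n + 1), (m j.castSucc : ℚ) *
              Ccoef (fun i : Fin (n + 1) =>
                if i = j then m j.castSucc + m (Fin.last (n + 1)) else m i.castSucc) r)
          = ∑ J ∈ (Finset.univ : Finset (Fin (n + 1))).powerset,
              (if (∑ i ∈ J, m i.castSucc) < r ∧
                    r ≤ (∑ i ∈ J, m i.castSucc) + m (Fin.last (n + 1)) then
                (r : ℚ) ^ ((J.card : ℤ) - 1)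
                  * ((∑ i, (m i : ℚ)) - r) ^ (((n + 1 : ℕ) : ℤ) - J.card - 1)
                  * ((r : ℚ) - ∑ i ∈ J, (m i.castSucc : ℚ))
                  * ((m (Fin.last (n + 1)) : ℚ) + (∑ i ∈ J, (m i.castSucc : ℚ)) - r)
              else 0) := by
        intro r hr
        have hr' := Finset.mem_Icc.1 hr
        exact Dr n m r hr'.1 (by omega)
      rw [Finset.sum_congr rfl hDr, Finset.sum_comm,
        Finset.sum_congr rfl (fun J _ => inner_r n m e he J), Finset.sum_comm]
      have hmain : ∀ u ∈ Finset.Icc 1 (m (Fin.last (n + 1))),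
          (∑ J ∈ (Finset.univ : Finset (Fin (n + 1))).powerset,
            ((((∑ i ∈ J, m i.castSucc) + u : ℕ) : ℚ) ^ ((J.card : ℤ) - 1)
              * ((∑ i, (m i : ℚ)) - (((∑ i ∈ J, m i.castSucc) + u : ℕ) : ℚ))
                  ^ (((n + 1 : ℕ) : ℤ) - J.card - 1)
              * ((((∑ i ∈ J, m i.castSucc) + u : ℕ) : ℚ) - ∑ i ∈ J, (m i.castSucc : ℚ))
              * ((m (Fin.last (n + 1)) : ℚ) + (∑ i ∈ J, (m i.castSucc : ℚ))
                  - (((∑ i ∈ J, m i.castSucc) + u : ℕ) : ℚ))))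
          = (if u = m (Fin.last (n + 1)) then 0
              else (m (Fin.last (n + 1)) : ℚ) * (∑ i, (m i : ℚ)) ^ n) := by
        intro u hu
        have hu' := Finset.mem_Icc.1 hu
        by_cases huM : u = m (Fin.last (n + 1))
        · rw [if_pos huM]
          apply Finset.sum_eq_zero
          intro J _
          have hz : (m (Fin.last (n + 1)) : ℚ) + (∑ i ∈ J, (m i.castSucc : ℚ))
              - (((∑ i ∈ J, m i.castSucc) + u : ℕ) : ℚ) = 0 := by
            rw [huM]; push_cast; ring
          rw [hz, mul_zero]
        · rw [if_neg huM]
          exact inner_u n m hm u hu'.1 (lt_of_le_of_ne hu'.2 huM)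
      rw [Finset.sum_congr rfl hmain]
      have hite : ∀ u ∈ Finset.Icc 1 (m (Fin.last (n + 1))),
          (if u = m (Fin.last (n + 1)) then (0:ℚ)
            else (m (Fin.last (n + 1)) : ℚ) * (∑ i, (m i : ℚ)) ^ n)
          = (m (Fin.last (n + 1)) : ℚ) * (∑ i, (m i : ℚ)) ^ n
            - (if u = m (Fin.last (n + 1)) then
                (m (Fin.last (n + 1)) : ℚ) * (∑ i, (m i : ℚ)) ^ n else 0) := by
        intro u _
        split_ifs with h
        · ring
        · ring
      rw [Finset.sum_congr rfl hite, Finset.sum_sub_distrib, Finset.sum_const,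
        Finset.sum_ite_eq' (Finset.Icc 1 (m (Fin.last (n + 1)))) (m (Fin.last (n + 1)))
          (fun _ => (m (Fin.last (n + 1)) : ℚ) * (∑ i, (m i : ℚ)) ^ n),
        if_pos (Finset.mem_Icc.2 ⟨hm _, le_refl _⟩), Nat.card_Icc, nsmul_eq_mul]
      push_cast
      ring
    rw [hmid, htopC]
    have htopsum : ∑ j : Fin (n + 1), (m j.castSucc : ℚ) *
        Ccoef (fun i : Fin (n + 1) =>
          if i = j then m j.castSucc + m (Fin.last (n + 1)) else m i.castSucc) (e + 1)
        = ((∑ i, (m i : ℚ)) - (m (Fin.last (n + 1)) : ℚ)) * (∑ i, (m i : ℚ)) ^ n := by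
      rw [Finset.sum_congr rfl (fun j _ => by rw [htopCj j]), ← Finset.sum_mul]
      congr 1
      rw [hsplitQ]
      ring
    rw [htopsum]
    ring
  rw [Finset.sum_sub_distrib] at key
  linarith [key]
end
end
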